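/- arXiv:1907.05004 — 5 statements merged into one kernel-verified Lean document; each statement's English description precedes it below -/
import Mathlib

section
/- Let M be a smooth manifold, φ: M → M a diffeomorphism, and π a bivector field on M. Then: (a) π is a Poisson structure on M (i.e. [π,π] = 0 for the Schouten bracket) if and only if [π^!, π^!]_{φ*} = 0; and (b) φ is a Poisson isomorphism for π (i.e. φ_*π = π) if and only if π^! is Ad_{φ*}-invariant, i.e. Ad_{φ*}(π^!) = π^!. -/
set_option maxHeartbeats 1000000

namespace HomPaper

variable {R : Type} [CommRing R]

/-- A `(σ,σ)`-derivation of the commutative ring `R` (modelling `C^∞(M)`), i.e. an additive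
map `X : R → R` with `X (a b) = X a * σ b + σ a * X b`.  These model sections of the
pull-back bundle `φ^!TM`. -/
structure SDeriv (R : Type) [CommRing R] (σ : R ≃+* R) where
  toFun : R → R
  map_add' : ∀ a b, toFun (a + b) = toFun a + toFun b
  leibniz' : ∀ a b, toFun (a * b) = toFun a * σ b + σ a * toFun b

namespace SDeriv

variable {σ : R ≃+* R}

instance : FunLike (SDeriv R σ) R R where
  coe := SDeriv.toFun
  coe_injective := by rintro ⟨f, _, _⟩ ⟨g, _, _⟩ h; simpa using h

@[ext] theorem ext {X Y : SDeriv R σ} (h : ∀ a, X a = Y a) : X = Y := DFunLike.ext _ _ h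

@[simp] theorem mk_apply (f : R → R) (h1 h2) (a : R) : (⟨f, h1, h2⟩ : SDeriv R σ) a = f a := rfl

@[simp] theorem map_add (X : SDeriv R σ) (a b : R) : X (a + b) = X a + X b := X.map_add' a b

theorem leibniz (X : SDeriv R σ) (a b : R) : X (a * b) = X a * σ b + σ a * X b := X.leibniz' a b

@[simp] theorem map_zero (X : SDeriv R σ) : X 0 = 0 := by
  have h := X.map_add 0 0
  simpa using h.symm

@[simp] theorem map_neg (X : SDeriv R σ) (a : R) : X (-a) = -(X a) := by
  have h := X.map_add a (-a)
  simp at h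
  exact eq_neg_of_add_eq_zero_right h.symm

@[simp] theorem map_sub (X : SDeriv R σ) (a b : R) : X (a - b) = X a - X b := by
  rw [sub_eq_add_neg, map_add, map_neg, sub_eq_add_neg]

instance : Zero (SDeriv R σ) := ⟨⟨fun _ => 0, by simp, by simp⟩⟩
instance : Add (SDeriv R σ) :=
  ⟨fun X Y => ⟨fun a => X a + Y a, by intro a b; simp; ring, by intro a b; simp [leibniz]; ring⟩⟩
instance : Neg (SDeriv R σ) :=
  ⟨fun X => ⟨fun a => -(X a), by intro a b; simp; ring, by intro a b; simp [leibniz]; ring⟩⟩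
instance : SMul R (SDeriv R σ) :=
  ⟨fun r X => ⟨fun a => r * X a, by intro a b; simp; ring, by intro a b; simp [leibniz]; ring⟩⟩

@[simp] theorem zero_apply (a : R) : (0 : SDeriv R σ) a = 0 := rfl
@[simp] theorem add_apply (X Y : SDeriv R σ) (a : R) : (X + Y) a = X a + Y a := rfl
@[simp] theorem neg_apply (X : SDeriv R σ) (a : R) : (-X) a = -(X a) := rfl
@[simp] theorem smul_apply (r : R) (X : SDeriv R σ) (a : R) : (r • X) a = r * X a := rfl

instance : AddCommGroup (SDeriv R σ) where
  add_assoc X Y Z := by ext a; simp; ring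
  zero_add X := by ext a; simp
  add_zero X := by ext a; simp
  add_comm X Y := by ext a; simp; ring
  neg_add_cancel X := by ext a; simp
  nsmul := nsmulRec
  zsmul := zsmulRec

instance : Module R (SDeriv R σ) where
  one_smul X := by ext a; simp
  mul_smul r s X := by ext a; simp; ring
  smul_zero r := by ext a; simp
  smul_add r X Y := by ext a; simp; ring
  add_smul r s X := by ext a; simp; ring
  zero_smul X := by ext a; simp

/-- The operator `Ad_{φ^*} X := φ^* ∘ X ∘ (φ^*)^{-1}`. -/
def Ad (σ : R ≃+* R) (X : SDeriv R σ) : SDeriv R σ :=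
  ⟨fun a => σ (X (σ.symm a)), by intro a b; simp, by
    intro a b
    simp [map_mul, leibniz, RingEquiv.apply_symm_apply]⟩

@[simp] theorem Ad_apply (σ : R ≃+* R) (X : SDeriv R σ) (a : R) :
    Ad σ X a = σ (X (σ.symm a)) := rfl

/-- `Ad_{φ^*}` as an additive equivalence. -/
def AdEquiv (σ : R ≃+* R) : SDeriv R σ ≃+ SDeriv R σ where
  toFun := Ad σ
  invFun X := ⟨fun a => σ.symm (X (σ a)), by intro a b; simp, by
    intro a b
    simp [map_mul, leibniz, RingEquiv.symm_apply_apply]⟩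
  left_inv X := by ext a; simp
  right_inv X := by ext a; simp
  map_add' X Y := by ext a; simp

@[simp] theorem AdEquiv_apply (σ : R ≃+* R) (X : SDeriv R σ) (a : R) :
    AdEquiv σ X a = σ (X (σ.symm a)) := rfl

@[simp] theorem AdEquiv_symm_apply (σ : R ≃+* R) (X : SDeriv R σ) (a : R) :
    (AdEquiv σ).symm X a = σ.symm (X (σ a)) := rfl

/-- The bracket `[X,Y]_{φ^*} = φ^*∘X∘(φ^*)⁻¹∘Y∘(φ^*)⁻¹ − φ^*∘Y∘(φ^*)⁻¹∘X∘(φ^*)⁻¹`. -/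
def sbrack (σ : R ≃+* R) (X Y : SDeriv R σ) : SDeriv R σ :=
  ⟨fun a => σ (X (σ.symm (Y (σ.symm a)))) - σ (Y (σ.symm (X (σ.symm a)))), by
    intro a b; simp; ring, by
    intro a b
    simp [map_mul, map_add, leibniz, RingEquiv.apply_symm_apply, RingEquiv.symm_apply_apply]
    ring⟩

@[simp] theorem sbrack_apply (σ : R ≃+* R) (X Y : SDeriv R σ) (a : R) :
    sbrack σ X Y a = σ (X (σ.symm (Y (σ.symm a)))) - σ (Y (σ.symm (X (σ.symm a)))) := rfl

end SDeriv

/-- For an (ordinary) derivation `X` of `R = C^∞(M)` (i.e. a vector field on `M`), its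
pull-back section `X^! ∈ Γ(φ^!TM)`, realised as the `(σ,σ)`-derivation `σ ∘ X`. -/
def shriekDeriv (σ : R ≃+* R) (X : SDeriv R (RingEquiv.refl R)) : SDeriv R σ :=
  ⟨fun a => σ (X a), by intro a b; simp, by
    intro a b
    show σ (X (a * b)) = σ (X a) * σ b + σ a * σ (X b)
    rw [X.leibniz]
    simp⟩

@[simp] theorem shriekDeriv_apply (σ : R ≃+* R) (X : SDeriv R (RingEquiv.refl R)) (a : R) :
    shriekDeriv σ X a = σ (X a) := rfl

/-- The push-forward `φ_* X` of a vector field (derivation) `X`, realised as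
`(φ^*)⁻¹ ∘ X ∘ φ^*`. -/
def pushDeriv (σ : R ≃+* R) (X : SDeriv R (RingEquiv.refl R)) : SDeriv R (RingEquiv.refl R) :=
  ⟨fun a => σ.symm (X (σ a)), by intro a b; simp, by
    intro a b
    show σ.symm (X (σ (a * b))) = σ.symm (X (σ a)) * (RingEquiv.refl R) b +
      (RingEquiv.refl R) a * σ.symm (X (σ b))
    rw [map_mul, X.leibniz]
    simp⟩

@[simp] theorem pushDeriv_apply (σ : R ≃+* R) (X : SDeriv R (RingEquiv.refl R)) (a : R) :
    pushDeriv σ X a = σ.symm (X (σ a)) := rfl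

/-- The raw data of a Hom-Lie algebroid over (the ring of functions of) `M`:
an invertible Hom-bundle map `φ_A`, a bracket, and an anchor with values in the
`(σ,σ)`-derivations of `R` (sections of `φ^!TM`). -/
structure PreAlgebroid (σ : R ≃+* R) (A : Type) [AddCommGroup A] [Module R A] where
  φA : A ≃+ A
  φA_smul : ∀ (f : R) (X : A), φA (f • X) = σ f • φA X
  bracket : A → A → A
  anchor : A →ₗ[R] SDeriv R σ

/-- The axioms making the data of a `PreAlgebroid` into a Hom-Lie algebroid
(Definition 2.5 of the paper): `(Γ(A), φ_A, [·,·]_A)` is a Hom-Lie algebra, the Leibniz rule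
holds, and the anchor is compatible with `φ_A` and the brackets. -/
def PreAlgebroid.IsHomLie {σ : R ≃+* R} {A : Type} [AddCommGroup A] [Module R A]
    (P : PreAlgebroid σ A) : Prop :=
  (∀ X Y Z : A, P.bracket (X + Y) Z = P.bracket X Z + P.bracket Y Z) ∧
  (∀ X Y Z : A, P.bracket X (Y + Z) = P.bracket X Y + P.bracket X Z) ∧
  (∀ X Y : A, P.bracket X Y = - P.bracket Y X) ∧
  (∀ X Y : A, P.φA (P.bracket X Y) = P.bracket (P.φA X) (P.φA Y)) ∧
  (∀ X Y Z : A, P.bracket (P.φA X) (P.bracket Y Z) + P.bracket (P.φA Y) (P.bracket Z X) +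
      P.bracket (P.φA Z) (P.bracket X Y) = 0) ∧
  (∀ (X : A) (f : R) (Y : A),
      P.bracket X (f • Y) = σ f • P.bracket X Y + P.anchor (P.φA X) f • P.φA Y) ∧
  (∀ X : A, P.anchor (P.φA X) = SDeriv.Ad σ (P.anchor X)) ∧
  (∀ X Y : A, P.anchor (P.bracket X Y) = SDeriv.sbrack σ (P.anchor X) (P.anchor Y))

/-- Given raw structure maps on a module `A`, the property of being a Hom-Lie algebroid. -/
def IsHomLieAlgebroidRaw (σ : R ≃+* R) {A : Type} [AddCommGroup A] [Module R A]
    (φA : A → A) (bracket : A → A → A) (anchor : A → SDeriv R σ) : Prop :=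
  Function.Bijective φA ∧
  (∀ X Y, φA (X + Y) = φA X + φA Y) ∧
  (∀ (f : R) (X : A), φA (f • X) = σ f • φA X) ∧
  (∀ X Y, anchor (X + Y) = anchor X + anchor Y) ∧
  (∀ (f : R) (X : A), anchor (f • X) = f • anchor X) ∧
  (∀ X Y Z, bracket (X + Y) Z = bracket X Z + bracket Y Z) ∧
  (∀ X Y Z, bracket X (Y + Z) = bracket X Y + bracket X Z) ∧
  (∀ X Y, bracket X Y = - bracket Y X) ∧
  (∀ X Y, φA (bracket X Y) = bracket (φA X) (φA Y)) ∧
  (∀ X Y Z, bracket (φA X) (bracket Y Z) + bracket (φA Y) (bracket Z X) +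
      bracket (φA Z) (bracket X Y) = 0) ∧
  (∀ X (f : R) Y, bracket X (f • Y) = σ f • bracket X Y + anchor (φA X) f • φA Y) ∧
  (∀ X, anchor (φA X) = SDeriv.Ad σ (anchor X)) ∧
  (∀ X Y, anchor (bracket X Y) = SDeriv.sbrack σ (anchor X) (anchor Y))

/-- The Hom-Lie algebroid `(φ^!TM, φ, Ad_{φ^*}, [·,·]_{φ^*}, id)` (Example 2.7). -/
def pullbackAlgebroid (σ : R ≃+* R) : PreAlgebroid σ (SDeriv R σ) where
  φA := SDeriv.AdEquiv σ
  φA_smul f X := by ext a; simp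
  bracket := SDeriv.sbrack σ
  anchor := LinearMap.id


namespace PreAlgebroid

variable {σ : R ≃+* R} {A : Type} [AddCommGroup A] [Module R A]

theorem φA_symm_smul (P : PreAlgebroid σ A) (f : R) (X : A) :
    P.φA.symm (f • X) = σ.symm f • P.φA.symm X := by
  apply P.φA.injective
  rw [P.φA_smul]
  simp

/-- The map `φ_A^† : Γ(A^*) → Γ(A^*)`, `⟨φ_A^†(ξ), X⟩ = φ^*⟨ξ, φ_A^{-1}(X)⟩`. -/
def phiDag (P : PreAlgebroid σ A) (ξ : Module.Dual R A) : Module.Dual R A where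
  toFun X := σ (ξ (P.φA.symm X))
  map_add' X Y := by simp
  map_smul' f X := by simp [P.φA_symm_smul, smul_eq_mul]

@[simp] theorem phiDag_apply (P : PreAlgebroid σ A) (ξ : Module.Dual R A) (X : A) :
    P.phiDag ξ X = σ (ξ (P.φA.symm X)) := rfl

/-- The inverse `(φ_A^†)^{-1}` of `φ_A^†`. -/
def phiDagInv (P : PreAlgebroid σ A) (ξ : Module.Dual R A) : Module.Dual R A where
  toFun X := σ.symm (ξ (P.φA X))
  map_add' X Y := by simp
  map_smul' f X := by simp [P.φA_smul, smul_eq_mul]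

@[simp] theorem phiDagInv_apply (P : PreAlgebroid σ A) (ξ : Module.Dual R A) (X : A) :
    P.phiDagInv ξ X = σ.symm (ξ (P.φA X)) := rfl

/-- `φ_A^†` as an additive equivalence of `Γ(A^*)`. -/
def phiDagEquiv (P : PreAlgebroid σ A) : Module.Dual R A ≃+ Module.Dual R A where
  toFun := P.phiDag
  invFun := P.phiDagInv
  left_inv ξ := by ext X; simp
  right_inv ξ := by ext X; simp
  map_add' ξ η := by ext X; simp

@[simp] theorem phiDagEquiv_apply (P : PreAlgebroid σ A) (ξ : Module.Dual R A) :
    P.phiDagEquiv ξ = P.phiDag ξ := rfl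

theorem phiDag_smul (P : PreAlgebroid σ A) (f : R) (ξ : Module.Dual R A) :
    P.phiDag (f • ξ) = σ f • P.phiDag ξ := by
  ext X; simp

/-- The differential on functions: `⟨d_A f, X⟩ = a_A(X)(f)`. -/
def dZero (P : PreAlgebroid σ A) (f : R) : Module.Dual R A where
  toFun X := P.anchor X f
  map_add' X Y := by show P.anchor (X + Y) f = _; rw [map_add]; simp
  map_smul' c X := by show P.anchor (c • X) f = _; rw [map_smul]; simp [smul_eq_mul]

@[simp] theorem dZero_apply (P : PreAlgebroid σ A) (f : R) (X : A) :
    P.dZero f X = P.anchor X f := rfl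

/-- The Lie derivative of a cosection, characterised (via the Hom-Cartan formula) by
`⟨L_X^A α, Y⟩ = a_A(φ_A X)⟨α, φ_A^{-1} Y⟩ − ⟨φ_A^† α, [X, φ_A^{-1} Y]_A⟩`. -/
def lie (P : PreAlgebroid σ A) (hP : P.IsHomLie) (X : A) (ξ : Module.Dual R A) :
    Module.Dual R A where
  toFun Y := P.anchor (P.φA X) (ξ (P.φA.symm Y)) - P.phiDag ξ (P.bracket X (P.φA.symm Y))
  map_add' Y Z := by
    obtain ⟨hbl, hbr, hskew, hφbr, hjac, hlei, haφ, habr⟩ := hP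
    simp [hbr]
    ring
  map_smul' f Y := by
    obtain ⟨hbl, hbr, hskew, hφbr, hjac, hlei, haφ, habr⟩ := hP
    simp only [P.φA_symm_smul, map_smul, smul_eq_mul, RingHom.id_apply]
    rw [SDeriv.leibniz, hlei, map_add, map_smul, map_smul]
    simp only [phiDag_apply, smul_eq_mul, AddEquiv.symm_apply_apply,
      RingEquiv.apply_symm_apply]
    ring

@[simp] theorem lie_apply (P : PreAlgebroid σ A) (hP : P.IsHomLie) (X : A)
    (ξ : Module.Dual R A) (Y : A) :
    P.lie hP X ξ Y =
      P.anchor (P.φA X) (ξ (P.φA.symm Y)) - P.phiDag ξ (P.bracket X (P.φA.symm Y)) := rfl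

/-- The bracket `[ξ,η]_π := L_{♯ξ}^A η − L_{♯η}^A ξ − d_A⟨♯ξ, η⟩` induced by a map
`♯ : Γ(A^*) → Γ(A)` (e.g. `π^♯` for a 2-section `π`). -/
def piBr (P : PreAlgebroid σ A) (hP : P.IsHomLie) (sh : Module.Dual R A →ₗ[R] A)
    (ξ η : Module.Dual R A) : Module.Dual R A :=
  P.lie hP (sh ξ) η - P.lie hP (sh η) ξ - P.dZero (η (sh ξ))

/-- The degree-one part of the differential of a Hom-Lie algebroid, as a 2-form. -/
def dOne (P : PreAlgebroid σ A) (ξ : Module.Dual R A) : A → A → R := fun X Y =>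
  P.anchor X (ξ (P.φA.symm Y)) - P.anchor Y (ξ (P.φA.symm X)) -
    P.phiDag ξ (P.bracket (P.φA.symm X) (P.φA.symm Y))

/-- The action of `φ_A` on `(1,1)`-tensors (bundle maps `N : A → A`), given under the
identification `Γ(A^* ⊗ A) ≅ End(Γ(A))` by `φ_A(N) = φ_A ∘ N ∘ φ_A^{-1}`. -/
def phiEnd (P : PreAlgebroid σ A) (N : A →ₗ[R] A) : A →ₗ[R] A where
  toFun X := P.φA (N (P.φA.symm X))
  map_add' X Y := by simp
  map_smul' f X := by simp [P.φA_symm_smul, P.φA_smul]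

@[simp] theorem phiEnd_apply (P : PreAlgebroid σ A) (N : A →ₗ[R] A) (X : A) :
    P.phiEnd N X = P.φA (N (P.φA.symm X)) := rfl

/-- The action of `φ_A` on `(1,1)`-tensors on `A^*` (bundle maps `Γ(A^*) → Γ(A^*)`),
`φ_A(P') = φ_A^† ∘ P' ∘ (φ_A^†)^{-1}`. -/
def phiEndDual (P : PreAlgebroid σ A) (Q : Module.Dual R A → Module.Dual R A) :
    Module.Dual R A → Module.Dual R A := fun ξ => P.phiDag (Q (P.phiDagInv ξ))

/-- The Nijenhuis torsion of a bundle map `N : A → A`. -/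
def torsion (P : PreAlgebroid σ A) (N : A →ₗ[R] A) (X Y : A) : A :=
  P.bracket (N X) (N Y) - N (P.bracket (N X) Y) - N (P.bracket X (N Y)) +
    N (N (P.bracket X Y))

/-- The deformed bracket `[X,Y]_N := [NX,Y]_A + [X,NY]_A − N[X,Y]_A`. -/
def bracketN (P : PreAlgebroid σ A) (N : A →ₗ[R] A) (X Y : A) : A :=
  P.bracket (N X) Y + P.bracket X (N Y) - N (P.bracket X Y)

/-- The Lie derivative of a `(1,1)`-tensor `N`, as an operator:
`(L_X^A N)(Y) = L_X^A(N(φ_A^{-1} Y)) − φ_A(N)(L_X^A(φ_A^{-1} Y))`. -/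
def lieEndOp (P : PreAlgebroid σ A) (X : A) (N : A →ₗ[R] A) : A → A := fun Y =>
  P.bracket X (N (P.φA.symm Y)) - P.phiEnd N (P.bracket X (P.φA.symm Y))

end PreAlgebroid

/-- The dual `N^* : Γ(A^*) → Γ(A^*)` of a bundle map `N : A → A`. -/
def Ndual {A : Type} [AddCommGroup A] [Module R A] (N : A →ₗ[R] A)
    (ξ : Module.Dual R A) : Module.Dual R A := ξ ∘ₗ N

@[simp] theorem Ndual_apply {A : Type} [AddCommGroup A] [Module R A] (N : A →ₗ[R] A)
    (ξ : Module.Dual R A) (X : A) : Ndual N ξ X = ξ (N X) := rfl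

/-- Iterated composition `N^p` of a bundle map. -/
def Npow {A : Type} [AddCommGroup A] [Module R A] (N : A →ₗ[R] A) : ℕ → (A →ₗ[R] A)
  | 0 => LinearMap.id
  | p + 1 => N ∘ₗ Npow N p


/-- An axiomatisation of the algebra `Γ(Λ^• A)` of multisections of a Hom-Lie algebroid,
with its grading, wedge product, extension of `φ_A`, Hom-Schouten bracket, contractions
with cosections, and evaluation against tuples of cosections. -/
structure HomSchoutenCalc {σ : R ≃+* R} {A : Type} [AddCommGroup A] [Module R A]
    (P : PreAlgebroid σ A) (S : Type) [AddCommGroup S] [Module R S] where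
  G : ℕ → Submodule R S
  ofFun : R →ₗ[R] S
  ofSec : A →ₗ[R] S
  ofFun_mem : ∀ f : R, ofFun f ∈ G 0
  ofSec_mem : ∀ X : A, ofSec X ∈ G 1
  wedge : S → S → S
  wedge_add_left : ∀ D₁ D₂ E, wedge (D₁ + D₂) E = wedge D₁ E + wedge D₂ E
  wedge_add_right : ∀ D E₁ E₂, wedge D (E₁ + E₂) = wedge D E₁ + wedge D E₂
  wedge_smul_left : ∀ (f : R) D E, wedge (f • D) E = f • wedge D E
  wedge_smul_right : ∀ (f : R) D E, wedge D (f • E) = f • wedge D E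
  wedge_mem : ∀ {k l : ℕ} {D E : S}, D ∈ G k → E ∈ G l → wedge D E ∈ G (k + l)
  wedge_assoc : ∀ D E F, wedge (wedge D E) F = wedge D (wedge E F)
  wedge_fun_left : ∀ (f : R) D, wedge (ofFun f) D = f • D
  wedge_comm : ∀ {k l : ℕ} {D E : S}, D ∈ G k → E ∈ G l →
    wedge D E = ((-1 : ℤ) ^ (k * l)) • wedge E D
  span_decomp : ∀ n : ℕ, G n ≤ Submodule.span R
    {D | ∃ v : Fin n → A, D = (List.ofFn fun i => ofSec (v i)).foldr wedge (ofFun 1)}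
  phi : S → S
  phi_add : ∀ D E, phi (D + E) = phi D + phi E
  phi_smul : ∀ (f : R) D, phi (f • D) = σ f • phi D
  phi_ofFun : ∀ f, phi (ofFun f) = ofFun (σ f)
  phi_ofSec : ∀ X, phi (ofSec X) = ofSec (P.φA X)
  phi_wedge : ∀ D E, phi (wedge D E) = wedge (phi D) (phi E)
  phi_mem : ∀ {k : ℕ} {D : S}, D ∈ G k → phi D ∈ G k
  br : S → S → S
  br_add_left : ∀ D₁ D₂ E, br (D₁ + D₂) E = br D₁ E + br D₂ E
  br_add_right : ∀ D E₁ E₂, br D (E₁ + E₂) = br D E₁ + br D E₂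
  br_mem : ∀ {k l : ℕ} {D E : S}, D ∈ G k → E ∈ G l → br D E ∈ G (k + l - 1)
  br_ff : ∀ f g : R, br (ofFun f) (ofFun g) = 0
  br_Xf : ∀ (X : A) (f : R), br (ofSec X) (ofFun f) = ofFun (P.anchor (P.φA X) f)
  br_XY : ∀ X Y : A, br (ofSec X) (ofSec Y) = ofSec (P.bracket X Y)
  br_wedge : ∀ {k l : ℕ} {D₁ D₂ : S} (D₃ : S), D₁ ∈ G k → D₂ ∈ G l →
    br D₁ (wedge D₂ D₃) =
      wedge (br D₁ D₂) (phi D₃) + ((-1 : ℤ) ^ ((k + 1) * l)) • wedge (phi D₂) (br D₁ D₃)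
  br_skew : ∀ {k l : ℕ} {D₁ D₂ : S}, D₁ ∈ G k → D₂ ∈ G l →
    br D₁ D₂ = (-((-1 : ℤ) ^ ((k - 1) * (l - 1)))) • br D₂ D₁
  sharp : S → Module.Dual R A →ₗ[R] A
  sharp_add : ∀ D E, sharp (D + E) = sharp D + sharp E
  sharp_smul : ∀ (f : R) D, sharp (f • D) = f • sharp D
  sharp_wedge : ∀ (X Y : A) (α : Module.Dual R A),
    sharp (wedge (ofSec X) (ofSec Y)) α = α X • Y - α Y • X
  sharp_nondeg : ∀ D ∈ G 2, (∀ α, sharp D α = 0) → D = 0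
  sharp3 : S → Module.Dual R A → Module.Dual R A → A
  sharp3_add : ∀ D E α β, sharp3 (D + E) α β = sharp3 D α β + sharp3 E α β
  sharp3_wedge : ∀ (X Y Z : A) (α β : Module.Dual R A),
    sharp3 (wedge (ofSec X) (wedge (ofSec Y) (ofSec Z))) α β =
      (α X * β Y) • Z - (α X * β Z) • Y - (α Y * β X) • Z + (α Y * β Z) • X +
        (α Z * β X) • Y - (α Z * β Y) • X
  ev : ∀ {n : ℕ}, S → (Fin n → Module.Dual R A) → R
  ev_add : ∀ {n : ℕ} (D E : S) (ξ : Fin n → Module.Dual R A), ev (D + E) ξ = ev D ξ + ev E ξ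
  ev_fun : ∀ (f : R) (ξ : Fin 0 → Module.Dual R A), ev (ofFun f) ξ = f
  ev_sec : ∀ (X : A) (ξ : Fin 1 → Module.Dual R A), ev (ofSec X) ξ = ξ 0 X
  ev_two : ∀ {D : S}, D ∈ G 2 → ∀ ξ : Fin 2 → Module.Dual R A, ev D ξ = ξ 1 (sharp D (ξ 0))
  ev_three : ∀ {D : S}, D ∈ G 3 → ∀ ξ : Fin 3 → Module.Dual R A,
    ev D ξ = ξ 2 (sharp3 D (ξ 0) (ξ 1))
  ev_nondeg : ∀ {n : ℕ} (D : S), D ∈ G n → (∀ ξ : Fin n → Module.Dual R A, ev D ξ = 0) → D = 0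

/-- `(π, N)` is a Hom-Poisson-Nijenhuis structure on the Hom-Lie algebroid `P`:
`π` is a Hom-Poisson structure, `N` is a Hom-Nijenhuis structure, and they are compatible,
i.e. `N ∘ π^♯ = π^♯ ∘ N^*` and `C_π^N = 0`. -/
def IsHPN {σ : R ≃+* R} {A : Type} [AddCommGroup A] [Module R A] {P : PreAlgebroid σ A}
    (hP : P.IsHomLie) {S : Type} [AddCommGroup S] [Module R S] (C : HomSchoutenCalc P S)
    (π : S) (N : A →ₗ[R] A) : Prop :=
  π ∈ C.G 2 ∧ C.br π π = 0 ∧ C.phi π = π ∧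
  (∀ X Y : A, P.torsion N X Y = 0) ∧ P.phiEnd N = N ∧
  (∀ α : Module.Dual R A, N (C.sharp π α) = C.sharp π (Ndual N α)) ∧
  (∀ α β : Module.Dual R A,
    P.piBr hP (N ∘ₗ C.sharp π) α β -
      (P.piBr hP (C.sharp π) (Ndual N α) β + P.piBr hP (C.sharp π) α (Ndual N β) -
        Ndual N (P.piBr hP (C.sharp π) α β)) = 0)

/-- `L` is a Hom-Dirac structure in `E` with respect to the given pairing, Hom-Courant
bracket and map `φ_E`: it is (maximally) isotropic, integrable and `φ_E`-invariant. -/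
def IsDiracSet {E : Type} [AddCommGroup E] [Module R E] (pairE : E → E → R)
    (bbE : E → E → E) (φE : E → E) (L : Submodule R E) : Prop :=
  (∀ x ∈ L, ∀ y ∈ L, pairE x y = 0) ∧
  (∀ x : E, (∀ y ∈ L, pairE x y = 0) → x ∈ L) ∧
  (∀ x ∈ L, ∀ y ∈ L, bbE x y ∈ L) ∧
  (∀ x ∈ L, φE x ∈ L)

section Courant

variable [Invertible (2 : R)]

/-- A Hom-Courant algebroid (Definition 2.18 of the paper). -/
structure HomCourant (σ : R ≃+* R) (E : Type) [AddCommGroup E] [Module R E] where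
  φE : E ≃+ E
  φE_smul : ∀ (f : R) (e : E), φE (f • e) = σ f • φE e
  pair : E →ₗ[R] E →ₗ[R] R
  pair_symm : ∀ e₁ e₂, pair e₁ e₂ = pair e₂ e₁
  pair_nondeg : ∀ e : E, (∀ e', pair e e' = 0) → e = 0
  circ : E → E → E
  circ_add_left : ∀ e₁ e₂ e₃, circ (e₁ + e₂) e₃ = circ e₁ e₃ + circ e₂ e₃
  circ_add_right : ∀ e₁ e₂ e₃, circ e₁ (e₂ + e₃) = circ e₁ e₂ + circ e₁ e₃
  rho : E →ₗ[R] SDeriv R σ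
  Dop : R → E
  Dop_pair : ∀ (f : R) (e : E), pair (Dop f) e = (⅟(2 : R)) * rho e f
  phi_circ : ∀ e₁ e₂, φE (circ e₁ e₂) = circ (φE e₁) (φE e₂)
  homLeibniz : ∀ e₁ e₂ e₃,
    circ (φE e₁) (circ e₂ e₃) = circ (circ e₁ e₂) (φE e₃) + circ (φE e₂) (circ e₁ e₃)
  rho_phi : ∀ e, rho (φE e) = SDeriv.Ad σ (rho e)
  rho_circ : ∀ e₁ e₂, rho (circ e₁ e₂) = SDeriv.sbrack σ (rho e₁) (rho e₂)
  circ_self : ∀ e, circ e e = Dop (pair e e)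
  pair_phi : ∀ e₁ e₂, pair (φE e₁) (φE e₂) = σ (pair e₁ e₂)
  invariance : ∀ e e₁ e₂,
    rho (φE e) (pair e₁ e₂) = pair (circ e e₁) (φE e₂) + pair (φE e₁) (circ e e₂)

/-- The Hom-Courant bracket `[[e₁, e₂]] = ½ (e₁ ⊙ e₂ − e₂ ⊙ e₁)`. -/
def HomCourant.bb {σ : R ≃+* R} {E : Type} [AddCommGroup E] [Module R E]
    (HC : HomCourant σ E) (e₁ e₂ : E) : E :=
  (⅟(2 : R)) • (HC.circ e₁ e₂ - HC.circ e₂ e₁)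

end Courant


section Manifold

open scoped Manifold

variable {EM : Type} [NormedAddCommGroup EM] [NormedSpace ℝ EM]
  {HM : Type} [TopologicalSpace HM] {I : ModelWithCorners ℝ EM HM}
  {M : Type} [TopologicalSpace M] [ChartedSpace HM M] [IsManifold I (⊤ : ℕ∞) M]

/-- The pull-back `φ^* : C^∞(M) → C^∞(M)`, `φ^*f = f ∘ φ`, as a ring automorphism of the
ring of smooth functions, for a diffeomorphism `φ : M → M`. -/
noncomputable def pullbackRingEquiv (φ : Diffeomorph I I M M (⊤ : ℕ∞)) :
    ContMDiffMap I 𝓘(ℝ, ℝ) M ℝ (⊤ : ℕ∞) ≃+* ContMDiffMap I 𝓘(ℝ, ℝ) M ℝ (⊤ : ℕ∞) where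
  toFun f := f.comp φ.toContMDiffMap
  invFun f := f.comp φ.symm.toContMDiffMap
  left_inv f := by ext x; simp [ContMDiffMap.comp_apply]
  right_inv f := by ext x; simp [ContMDiffMap.comp_apply]
  map_add' f g := rfl
  map_mul' f g := rfl

end Manifold

section ShriekPush

variable {R : Type} [CommRing R]

/-- The data relating the multivector calculus `C₁` on `Γ(Λ^•TM)` (realised via the
Hom-Lie algebroid of ordinary derivations, `σ = id`) with the multivector calculus `C₂` on
`Γ(Λ^•φ^!TM)`: the pull-back isomorphism `(·)^!` (which is `φ^*`-semilinear, multiplicative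
for the wedge product, and on vector fields is `X ↦ X^! = φ^* ∘ X`), together with the
push-forward `φ_*` acting on multivector fields. -/
structure ShriekPush (σ : R ≃+* R)
    {S₁ : Type} [AddCommGroup S₁] [Module R S₁] {S₂ : Type} [AddCommGroup S₂] [Module R S₂]
    (C₁ : HomSchoutenCalc (pullbackAlgebroid (RingEquiv.refl R)) S₁)
    (C₂ : HomSchoutenCalc (pullbackAlgebroid σ) S₂) where
  shriek : S₁ →+ S₂
  shriek_bij : Function.Bijective shriek
  shriek_smul : ∀ (f : R) (D : S₁), shriek (f • D) = σ f • shriek D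
  shriek_fun : ∀ f : R, shriek (C₁.ofFun f) = C₂.ofFun (σ f)
  shriek_sec : ∀ X : SDeriv R (RingEquiv.refl R),
    shriek (C₁.ofSec X) = C₂.ofSec (shriekDeriv σ X)
  shriek_wedge : ∀ D E : S₁, shriek (C₁.wedge D E) = C₂.wedge (shriek D) (shriek E)
  shriek_mem : ∀ {k : ℕ} {D : S₁}, D ∈ C₁.G k → shriek D ∈ C₂.G k
  push : S₁ →+ S₁
  push_fun : ∀ f : R, push (C₁.ofFun f) = C₁.ofFun (σ.symm f)
  push_sec : ∀ X : SDeriv R (RingEquiv.refl R),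
    push (C₁.ofSec X) = C₁.ofSec (pushDeriv σ X)
  push_wedge : ∀ D E : S₁, push (C₁.wedge D E) = C₁.wedge (push D) (push E)
  push_mem : ∀ {k : ℕ} {D : S₁}, D ∈ C₁.G k → push D ∈ C₁.G k

end ShriekPush


section Bridge

variable {R : Type} [CommRing R] {σ : R ≃+* R}

theorem SDeriv.map_one_eq_zero {σ' : R ≃+* R} (X : SDeriv R σ') : X (1 : R) = 0 := by
  have h := X.leibniz 1 1
  simp only [mul_one, map_one, one_mul] at h
  have : X 1 = X 1 + X 1 := by simpa using h
  exact (left_eq_add.mp this)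

/-- conjugation `σ ∘ X ∘ σ⁻¹` of an ordinary derivation. -/
def conjDeriv (σ : R ≃+* R) (X : SDeriv R (RingEquiv.refl R)) : SDeriv R (RingEquiv.refl R) :=
  ⟨fun a => σ (X (σ.symm a)), by intro a b; simp, by
    intro a b
    show σ (X (σ.symm (a * b))) = σ (X (σ.symm a)) * (RingEquiv.refl R) b +
      (RingEquiv.refl R) a * σ (X (σ.symm b))
    rw [map_mul, X.leibniz]
    simp⟩

@[simp] theorem conjDeriv_apply (σ : R ≃+* R) (X : SDeriv R (RingEquiv.refl R)) (a : R) :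
    conjDeriv σ X a = σ (X (σ.symm a)) := rfl

theorem pushDeriv_conjDeriv (σ : R ≃+* R) (X : SDeriv R (RingEquiv.refl R)) :
    pushDeriv σ (conjDeriv σ X) = X := by
  ext a; simp

theorem shriekDeriv_conjDeriv (σ : R ≃+* R) (X : SDeriv R (RingEquiv.refl R)) :
    shriekDeriv σ (conjDeriv σ X) = SDeriv.AdEquiv σ (shriekDeriv σ X) := by
  ext a; simp

theorem adEquiv_shriek_push (σ : R ≃+* R) (X : SDeriv R (RingEquiv.refl R)) :
    SDeriv.AdEquiv σ (shriekDeriv σ (pushDeriv σ X)) = shriekDeriv σ X := by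
  ext a; simp

/-- Generators for the algebra of multivector fields. -/
inductive Gen (R : Type) [CommRing R] where
  | fn : R → Gen R
  | sec : SDeriv R (RingEquiv.refl R) → Gen R

/-- degree of a generator -/
def Gen.deg {R : Type} [CommRing R] : Gen R → ℕ
  | .fn _ => 0
  | .sec _ => 1

variable {S₁ : Type} [AddCommGroup S₁] [Module R S₁]
  {S₂ : Type} [AddCommGroup S₂] [Module R S₂]
  (C₁ : HomSchoutenCalc (pullbackAlgebroid (RingEquiv.refl R)) S₁)
  (C₂ : HomSchoutenCalc (pullbackAlgebroid σ) S₂)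

/-- Realisation of a generator in `C₁`. -/
def g1 : Gen R → S₁
  | .fn f => C₁.ofFun f
  | .sec X => C₁.ofSec X

/-- Realisation of the shriek of a generator in `C₂`. -/
def g2 : Gen R → S₂
  | .fn f => C₂.ofFun (σ f)
  | .sec X => C₂.ofSec (shriekDeriv σ X)

/-- Word in the generators, `C₁` side. -/
def W1 (L : List (Gen R)) : S₁ := L.foldr (fun g D => C₁.wedge (g1 C₁ g) D) (C₁.ofFun 1)

/-- Word in the generators, `C₂` side. -/
def W2 (L : List (Gen R)) : S₂ := L.foldr (fun g D => C₂.wedge (g2 C₂ g) D) (C₂.ofFun 1)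

/-- Degree of a word. -/
def ldeg (L : List (Gen R)) : ℕ := (L.map Gen.deg).sum

@[simp] theorem W1_nil : W1 C₁ ([] : List (Gen R)) = C₁.ofFun 1 := rfl
@[simp] theorem W1_cons (g : Gen R) (L : List (Gen R)) :
    W1 C₁ (g :: L) = C₁.wedge (g1 C₁ g) (W1 C₁ L) := rfl
@[simp] theorem W2_nil : W2 C₂ ([] : List (Gen R)) = C₂.ofFun 1 := rfl
@[simp] theorem W2_cons (g : Gen R) (L : List (Gen R)) :
    W2 C₂ (g :: L) = C₂.wedge (g2 C₂ g) (W2 C₂ L) := rfl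
@[simp] theorem g1_fn (f : R) : g1 C₁ (Gen.fn f) = C₁.ofFun f := rfl
@[simp] theorem g1_sec (X : SDeriv R (RingEquiv.refl R)) : g1 C₁ (Gen.sec X) = C₁.ofSec X := rfl
@[simp] theorem g2_fn (f : R) : g2 C₂ (Gen.fn f) = C₂.ofFun (σ f) := rfl
@[simp] theorem g2_sec (X : SDeriv R (RingEquiv.refl R)) :
    g2 C₂ (Gen.sec X) = C₂.ofSec (shriekDeriv σ X) := rfl
@[simp] theorem ldeg_nil : ldeg ([] : List (Gen R)) = 0 := rfl
@[simp] theorem ldeg_cons (g : Gen R) (L : List (Gen R)) :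
    ldeg (g :: L) = g.deg + ldeg L := rfl

theorem g1_mem (g : Gen R) : g1 C₁ g ∈ C₁.G g.deg := by
  cases g with
  | fn f => exact C₁.ofFun_mem f
  | sec X => exact C₁.ofSec_mem X

theorem g2_mem (g : Gen R) : g2 C₂ g ∈ C₂.G g.deg := by
  cases g with
  | fn f => exact C₂.ofFun_mem (σ f)
  | sec X => exact C₂.ofSec_mem (shriekDeriv σ X)

theorem W1_mem (L : List (Gen R)) : W1 C₁ L ∈ C₁.G (ldeg L) := by
  induction L with
  | nil => exact C₁.ofFun_mem 1
  | cons g L ih => exact C₁.wedge_mem (g1_mem C₁ g) ih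

theorem W2_mem (L : List (Gen R)) : W2 C₂ L ∈ C₂.G (ldeg L) := by
  induction L with
  | nil => exact C₂.ofFun_mem 1
  | cons g L ih => exact C₂.wedge_mem (g2_mem C₂ g) ih

variable (SP : ShriekPush σ C₁ C₂)

theorem shriek_g1 (g : Gen R) : SP.shriek (g1 C₁ g) = g2 C₂ g := by
  cases g with
  | fn f => exact SP.shriek_fun f
  | sec X => exact SP.shriek_sec X

theorem shriek_W1 (L : List (Gen R)) : SP.shriek (W1 C₁ L) = W2 C₂ L := by
  induction L with
  | nil => simpa using SP.shriek_fun 1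
  | cons g L ih => rw [W1_cons, SP.shriek_wedge, shriek_g1, ih, W2_cons]

/-- `φ_A`-twisted shriek as an additive morphism. -/
def Fmap : S₁ →+ S₂ := (AddMonoidHom.mk' C₂.phi C₂.phi_add).comp SP.shriek

@[simp] theorem Fmap_apply (D : S₁) : Fmap C₁ C₂ SP D = C₂.phi (SP.shriek D) := rfl

theorem phi2_zero : C₂.phi (0 : S₂) = 0 := (AddMonoidHom.mk' C₂.phi C₂.phi_add).map_zero

theorem Fmap_wedge (D E : S₁) :
    Fmap C₁ C₂ SP (C₁.wedge D E) = C₂.wedge (Fmap C₁ C₂ SP D) (Fmap C₁ C₂ SP E) := by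
  simp [SP.shriek_wedge, C₂.phi_wedge]

theorem br1_zero_right (D : S₁) : C₁.br D 0 = 0 := by
  have h := C₁.br_add_right D 0 0
  rw [add_zero] at h
  exact (left_eq_add.mp h)

theorem br1_zero_left (D : S₁) : C₁.br 0 D = 0 := by
  have h := C₁.br_add_left 0 0 D
  rw [add_zero] at h
  exact (left_eq_add.mp h)

theorem br2_zero_right (D : S₂) : C₂.br D 0 = 0 := by
  have h := C₂.br_add_right D 0 0
  rw [add_zero] at h
  exact (left_eq_add.mp h)

-- bracket formulas specialised to the pullback algebroids
theorem br1_Xf (X : SDeriv R (RingEquiv.refl R)) (f : R) :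
    C₁.br (C₁.ofSec X) (C₁.ofFun f) = C₁.ofFun (X f) := by
  have h := C₁.br_Xf X f
  simpa [pullbackAlgebroid] using h

theorem br2_Xf (X : SDeriv R σ) (f : R) :
    C₂.br (C₂.ofSec X) (C₂.ofFun f) = C₂.ofFun (σ (X (σ.symm f))) := by
  have h := C₂.br_Xf X f
  simpa [pullbackAlgebroid] using h

theorem br1_XY (X Y : SDeriv R (RingEquiv.refl R)) :
    C₁.br (C₁.ofSec X) (C₁.ofSec Y) = C₁.ofSec (SDeriv.sbrack (RingEquiv.refl R) X Y) :=
  C₁.br_XY X Y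

theorem br2_XY (X Y : SDeriv R σ) :
    C₂.br (C₂.ofSec X) (C₂.ofSec Y) = C₂.ofSec (SDeriv.sbrack σ X Y) :=
  C₂.br_XY X Y

theorem phi2_ofSec (X : SDeriv R σ) :
    C₂.phi (C₂.ofSec X) = C₂.ofSec (SDeriv.AdEquiv σ X) := C₂.phi_ofSec X

variable (hC₁ : ∀ D : S₁, C₁.phi D = D)

theorem gen_br (g h : Gen R) :
    Fmap C₁ C₂ SP (C₁.br (g1 C₁ g) (g1 C₁ h)) = C₂.br (g2 C₂ g) (g2 C₂ h) := by
  cases g with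
  | fn f =>
    cases h with
    | fn f' =>
      simp only [g1, g2, C₁.br_ff, C₂.br_ff]
      exact (Fmap C₁ C₂ SP).map_zero
    | sec X =>
      have h1 := C₁.br_skew (C₁.ofFun_mem f) (C₁.ofSec_mem X)
      have h2 := C₂.br_skew (C₂.ofFun_mem (σ f)) (C₂.ofSec_mem (shriekDeriv σ X))
      norm_num at h1 h2
      simp only [g1, g2, h1, h2, map_neg]
      rw [br1_Xf, br2_Xf]
      simp only [Fmap_apply, SP.shriek_fun, C₂.phi_ofFun, shriekDeriv_apply,
        RingEquiv.symm_apply_apply]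
  | sec X =>
    cases h with
    | fn f =>
      simp only [g1, g2]
      rw [br1_Xf, br2_Xf]
      simp only [Fmap_apply, SP.shriek_fun, C₂.phi_ofFun, shriekDeriv_apply,
        RingEquiv.symm_apply_apply]
    | sec Y =>
      simp only [g1, g2]
      rw [br1_XY, br2_XY]
      simp only [Fmap_apply, SP.shriek_sec, phi2_ofSec]
      congr 1
      ext a
      simp [SDeriv.sbrack_apply, map_sub]

include hC₁ in
theorem claim1 (g : Gen R) (L : List (Gen R)) :
    Fmap C₁ C₂ SP (C₁.br (g1 C₁ g) (W1 C₁ L)) = C₂.br (g2 C₂ g) (W2 C₂ L) := by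
  induction L with
  | nil =>
    have h := gen_br C₁ C₂ SP g (Gen.fn 1)
    simp only [g1_fn, g2_fn, map_one] at h
    simpa using h
  | cons h L ih =>
    rw [W1_cons, C₁.br_wedge (W1 C₁ L) (g1_mem C₁ g) (g1_mem C₁ h),
      W2_cons, C₂.br_wedge (W2 C₂ L) (g2_mem C₂ g) (g2_mem C₂ h)]
    rw [hC₁, hC₁, map_add, map_zsmul, Fmap_wedge, Fmap_wedge]
    rw [gen_br, ih]
    simp only [Fmap_apply, shriek_g1, shriek_W1]

include hC₁ in
theorem claim1' (L : List (Gen R)) (g : Gen R) :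
    Fmap C₁ C₂ SP (C₁.br (W1 C₁ L) (g1 C₁ g)) = C₂.br (W2 C₂ L) (g2 C₂ g) := by
  have h1 := C₁.br_skew (W1_mem C₁ L) (g1_mem C₁ g)
  have h2 := C₂.br_skew (W2_mem C₂ L) (g2_mem C₂ g)
  rw [h1, h2, map_zsmul, claim1 C₁ C₂ SP hC₁]

include hC₁ in
theorem claim2 (L L' : List (Gen R)) :
    Fmap C₁ C₂ SP (C₁.br (W1 C₁ L) (W1 C₁ L')) = C₂.br (W2 C₂ L) (W2 C₂ L') := by
  induction L' with
  | nil =>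
    have h := claim1' C₁ C₂ SP hC₁ L (Gen.fn 1)
    simp only [g1, g2, map_one] at h
    simpa using h
  | cons h L' ih =>
    rw [W1_cons, C₁.br_wedge (W1 C₁ L') (W1_mem C₁ L) (g1_mem C₁ h),
      W2_cons, C₂.br_wedge (W2 C₂ L') (W2_mem C₂ L) (g2_mem C₂ h)]
    rw [hC₁, hC₁, map_add, map_zsmul, Fmap_wedge, Fmap_wedge]
    rw [claim1' C₁ C₂ SP hC₁, ih]
    simp only [Fmap_apply, shriek_g1, shriek_W1]

theorem W1_fn (r : R) : W1 C₁ [Gen.fn r] = C₁.ofFun r := by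
  show C₁.wedge (C₁.ofFun r) (C₁.ofFun 1) = C₁.ofFun r
  rw [C₁.wedge_fun_left, ← map_smul, smul_eq_mul, mul_one]

theorem W2_fn (r : R) : W2 C₂ [Gen.fn r] = C₂.ofFun (σ r) := by
  show C₂.wedge (C₂.ofFun (σ r)) (C₂.ofFun 1) = C₂.ofFun (σ r)
  rw [C₂.wedge_fun_left, ← map_smul, smul_eq_mul, mul_one]

theorem foldr_map_sec (l : List (SDeriv R (RingEquiv.refl R))) :
    (l.map C₁.ofSec).foldr C₁.wedge (C₁.ofFun 1) = W1 C₁ (l.map Gen.sec) := by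
  induction l with
  | nil => rfl
  | cons X l ih => simp only [List.map_cons, List.foldr_cons, W1_cons, ih]; rfl

theorem ofFn_eq_W1 {n : ℕ} (v : Fin n → SDeriv R (RingEquiv.refl R)) :
    (List.ofFn fun i => C₁.ofSec (v i)).foldr C₁.wedge (C₁.ofFun 1) =
      W1 C₁ ((List.ofFn v).map Gen.sec) := by
  rw [show (List.ofFn fun i => C₁.ofSec (v i)) = (List.ofFn v).map C₁.ofSec from
    (List.map_ofFn (f := v) (g := C₁.ofSec)).symm]
  exact foldr_map_sec C₁ (List.ofFn v)

include hC₁ in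
theorem br_smul_right_key {m : ℕ} {D : S₁} (hD : D ∈ C₁.G m) (r : R)
    (hg : Fmap C₁ C₂ SP (C₁.br D (C₁.ofFun r)) = C₂.br (SP.shriek D) (C₂.ofFun (σ r)))
    {E : S₁} (hE : Fmap C₁ C₂ SP (C₁.br D E) = C₂.br (SP.shriek D) (SP.shriek E)) :
    Fmap C₁ C₂ SP (C₁.br D (r • E)) = C₂.br (SP.shriek D) (SP.shriek (r • E)) := by
  rw [show r • E = C₁.wedge (C₁.ofFun r) E from (C₁.wedge_fun_left r E).symm,
    C₁.br_wedge E hD (C₁.ofFun_mem r), SP.shriek_wedge, SP.shriek_fun,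
    C₂.br_wedge (SP.shriek E) (SP.shriek_mem hD) (C₂.ofFun_mem (σ r))]
  simp only [Nat.mul_zero, pow_zero, one_smul]
  rw [hC₁, hC₁, map_add, Fmap_wedge, Fmap_wedge, hg, hE]
  simp only [Fmap_apply, SP.shriek_fun]

include hC₁ in
theorem L10 {n : ℕ} (E : S₁)
    (hE : E ∈ Submodule.span R {D | ∃ v : Fin n → SDeriv R (RingEquiv.refl R),
      D = (List.ofFn fun i => C₁.ofSec (v i)).foldr C₁.wedge (C₁.ofFun 1)}) :
    ∀ L : List (Gen R),
      Fmap C₁ C₂ SP (C₁.br (W1 C₁ L) E) = C₂.br (SP.shriek (W1 C₁ L)) (SP.shriek E) := by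
  induction hE using Submodule.span_induction with
  | mem x hx =>
    obtain ⟨v, rfl⟩ := hx
    intro L
    rw [ofFn_eq_W1, shriek_W1, shriek_W1]
    exact claim2 C₁ C₂ SP hC₁ L _
  | zero =>
    intro L
    simp only [br1_zero_right, map_zero, br2_zero_right]
  | add x y hx hy ihx ihy =>
    intro L
    rw [C₁.br_add_right, map_add, map_add, C₂.br_add_right, ihx L, ihy L]
  | smul r x hx ihx =>
    intro L
    exact br_smul_right_key C₁ C₂ SP hC₁ (W1_mem C₁ L) r
      (by rw [shriek_W1]
          have h := claim1' C₁ C₂ SP hC₁ L (Gen.fn r)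
          simp only [g1_fn, g2_fn] at h
          exact h) (ihx L)

include hC₁ in
theorem L10' {n : ℕ} {E : S₁} (hE : E ∈ C₁.G n) (L : List (Gen R)) :
    Fmap C₁ C₂ SP (C₁.br E (W1 C₁ L)) = C₂.br (SP.shriek E) (W2 C₂ L) := by
  have h1 := C₁.br_skew hE (W1_mem C₁ L)
  have h2 := C₂.br_skew (SP.shriek_mem hE) (W2_mem C₂ L)
  rw [h1, map_zsmul, L10 C₁ C₂ SP hC₁ E (C₁.span_decomp n hE) L, shriek_W1, h2]

include hC₁ in
theorem brMain {m n : ℕ} {D E : S₁} (hD : D ∈ C₁.G m) (hE : E ∈ C₁.G n) :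
    Fmap C₁ C₂ SP (C₁.br D E) = C₂.br (SP.shriek D) (SP.shriek E) := by
  have hsp := C₁.span_decomp n hE
  clear hE
  induction hsp using Submodule.span_induction with
  | mem x hx =>
    obtain ⟨v, rfl⟩ := hx
    rw [ofFn_eq_W1, shriek_W1]
    exact L10' C₁ C₂ SP hC₁ hD _
  | zero =>
    simp only [br1_zero_right, map_zero, br2_zero_right]
  | add x y hx hy ihx ihy =>
    rw [C₁.br_add_right, map_add, map_add, C₂.br_add_right, ihx, ihy]
  | smul r x hx ihx =>
    exact br_smul_right_key C₁ C₂ SP hC₁ hD r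
      (by have h := L10' C₁ C₂ SP hC₁ hD [Gen.fn r]
          rwa [W1_fn, W2_fn] at h) ihx

theorem qList (l : List (SDeriv R (RingEquiv.refl R))) :
    C₂.phi (SP.shriek (SP.push (W1 C₁ (l.map Gen.sec)))) =
      SP.shriek (W1 C₁ (l.map Gen.sec)) := by
  induction l with
  | nil =>
    show C₂.phi (SP.shriek (SP.push (C₁.ofFun 1))) = SP.shriek (C₁.ofFun 1)
    rw [SP.push_fun, SP.shriek_fun, C₂.phi_ofFun, SP.shriek_fun]
    simp
  | cons X l ih =>
    simp only [List.map_cons, W1_cons, g1_sec]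
    rw [SP.push_wedge, SP.push_sec, SP.shriek_wedge, SP.shriek_sec, C₂.phi_wedge,
      phi2_ofSec, adEquiv_shriek_push, ih, SP.shriek_wedge, SP.shriek_sec]

theorem qMain {n : ℕ} {D : S₁} (hD : D ∈ C₁.G n) :
    C₂.phi (SP.shriek (SP.push D)) = SP.shriek D := by
  have hsp := C₁.span_decomp n hD
  clear hD
  induction hsp using Submodule.span_induction with
  | mem x hx =>
    obtain ⟨v, rfl⟩ := hx
    rw [ofFn_eq_W1]
    exact qList C₁ C₂ SP _
  | zero => simp [phi2_zero]
  | add x y hx hy ihx ihy => rw [map_add, map_add, C₂.phi_add, ihx, ihy, map_add]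
  | smul r x hx ihx =>
    rw [show r • x = C₁.wedge (C₁.ofFun r) x from (C₁.wedge_fun_left r x).symm,
      SP.push_wedge, SP.push_fun, SP.shriek_wedge, SP.shriek_fun, C₂.phi_wedge,
      C₂.phi_ofFun, RingEquiv.apply_symm_apply, ihx, SP.shriek_wedge, SP.shriek_fun]

theorem pList (l : List (SDeriv R (RingEquiv.refl R))) :
    ∃ E : S₁, SP.shriek E = C₂.phi (SP.shriek (W1 C₁ (l.map Gen.sec))) ∧
      SP.push E = W1 C₁ (l.map Gen.sec) := by
  induction l with
  | nil =>
    simp only [List.map_nil, W1_nil]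
    refine ⟨C₁.ofFun 1, ?_, ?_⟩
    · rw [SP.shriek_fun, C₂.phi_ofFun]
      simp
    · rw [SP.push_fun]; simp
  | cons X l ih =>
    obtain ⟨E', h1, h2⟩ := ih
    simp only [List.map_cons, W1_cons, g1_sec]
    refine ⟨C₁.wedge (C₁.ofSec (conjDeriv σ X)) E', ?_, ?_⟩
    · rw [SP.shriek_wedge, SP.shriek_sec, shriekDeriv_conjDeriv, h1,
        SP.shriek_wedge, SP.shriek_sec, C₂.phi_wedge, phi2_ofSec]
    · rw [SP.push_wedge, SP.push_sec, pushDeriv_conjDeriv, h2]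

theorem pMain {n : ℕ} {D : S₁} (hD : D ∈ C₁.G n) :
    ∃ E : S₁, SP.shriek E = C₂.phi (SP.shriek D) ∧ SP.push E = D := by
  have hsp := C₁.span_decomp n hD
  clear hD
  induction hsp using Submodule.span_induction with
  | mem x hx =>
    obtain ⟨v, rfl⟩ := hx
    rw [ofFn_eq_W1]
    exact pList C₁ C₂ SP _
  | zero => exact ⟨0, by simp [phi2_zero], by simp⟩
  | add x y hx hy ihx ihy =>
    obtain ⟨E₁, h1, h2⟩ := ihx
    obtain ⟨E₂, h3, h4⟩ := ihy
    exact ⟨E₁ + E₂, by rw [map_add, h1, h3, map_add, C₂.phi_add],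
      by rw [map_add, h2, h4]⟩
  | smul r x hx ihx =>
    obtain ⟨E, h1, h2⟩ := ihx
    refine ⟨C₁.wedge (C₁.ofFun (σ r)) E, ?_, ?_⟩
    · rw [SP.shriek_wedge, SP.shriek_fun, h1, SP.shriek_smul,
        show σ r • SP.shriek x = C₂.wedge (C₂.ofFun (σ r)) (SP.shriek x) from
          (C₂.wedge_fun_left _ _).symm,
        C₂.phi_wedge, C₂.phi_ofFun]
    · rw [SP.push_wedge, SP.push_fun, RingEquiv.symm_apply_apply, h2, C₁.wedge_fun_left]

end Bridge

section Statement3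

open scoped Manifold

variable {EM : Type} [NormedAddCommGroup EM] [NormedSpace ℝ EM]
  {HM : Type} [TopologicalSpace HM] {I : ModelWithCorners ℝ EM HM}
  {M : Type} [TopologicalSpace M] [ChartedSpace HM M] [IsManifold I (⊤ : ℕ∞) M]

/-- Let `M` be a smooth manifold, `φ : M → M` a diffeomorphism, and `π`
a bivector field on `M`.  Then (a) `π` is a Poisson structure (`[π,π] = 0` for the Schouten
bracket) iff `[π^!, π^!]_{φ^*} = 0`; and (b) `φ` is a Poisson isomorphism for `π`
(`φ_*π = π`) iff `π^!` is `Ad_{φ^*}`-invariant, i.e. `Ad_{φ^*}(π^!) = π^!`. -/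
theorem poisson_iff_shriek_poisson_and_invariant
    (φ : Diffeomorph I I M M (⊤ : ℕ∞))
    {S₁ : Type} [AddCommGroup S₁] [Module (ContMDiffMap I 𝓘(ℝ, ℝ) M ℝ (⊤ : ℕ∞)) S₁]
    {S₂ : Type} [AddCommGroup S₂] [Module (ContMDiffMap I 𝓘(ℝ, ℝ) M ℝ (⊤ : ℕ∞)) S₂]
    (C₁ : HomSchoutenCalc
      (pullbackAlgebroid (RingEquiv.refl (ContMDiffMap I 𝓘(ℝ, ℝ) M ℝ (⊤ : ℕ∞)))) S₁)
    (hC₁ : ∀ D : S₁, C₁.phi D = D)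
    (C₂ : HomSchoutenCalc (pullbackAlgebroid (pullbackRingEquiv φ)) S₂)
    (SP : ShriekPush (pullbackRingEquiv φ) C₁ C₂)
    (π : S₁) (hπ : π ∈ C₁.G 2) :
    ((C₁.br π π = 0) ↔ (C₂.br (SP.shriek π) (SP.shriek π) = 0)) ∧
    ((SP.push π = π) ↔ (C₂.phi (SP.shriek π) = SP.shriek π)) := by
  constructor
  · constructor
    · intro h
      have hb := brMain C₁ C₂ SP hC₁ hπ hπ
      rw [h, map_zero] at hb
      exact hb.symm
    · intro h
      have hb : C₂.phi (SP.shriek (C₁.br π π)) = 0 := by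
        have hb0 := brMain C₁ C₂ SP hC₁ hπ hπ
        rw [h] at hb0
        exact hb0
      have h3 : C₁.br π π ∈ C₁.G 3 := by
        have h4 := C₁.br_mem hπ hπ
        norm_num at h4
        exact h4
      obtain ⟨E, hE1, hE2⟩ := pMain C₁ C₂ SP h3
      have hE0 : E = 0 := SP.shriek_bij.1 (by rw [hE1, hb, map_zero])
      rw [hE0, map_zero] at hE2
      exact hE2.symm
  · constructor
    · intro h
      have hq := qMain C₁ C₂ SP hπ
      rw [h] at hq
      exact hq
    · intro h
      obtain ⟨E, hE1, hE2⟩ := pMain C₁ C₂ SP hπ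
      rw [h] at hE1
      have hE0 : E = π := SP.shriek_bij.1 hE1
      rw [hE0] at hE2
      exact hE2

end Statement3

end HomPaper
end

section
/- Let π be a Hom-Poisson structure on a Hom-Lie algebroid (A, φ, φ_A, [·,·]_A, a_A). If the set {d_π f | f ∈ C∞(M)} generates Γ(A) as a C∞(M)-module (d_π being the differential of the Hom-Lie algebroid A*_π), then the pair (A, A*_π) is a Hom-Lie bialgebroid. -/
set_option maxHeartbeats 1000000

namespace HomPaper

variable {R : Type} [CommRing R]

section Aux

variable {R : Type} [CommRing R] {σ : R ≃+* R} {A : Type} [AddCommGroup A] [Module R A]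
  {P : PreAlgebroid σ A} {S : Type} [AddCommGroup S] [Module R S]

theorem PreAlgebroid.phiDag_phiDagInv_apply (P : PreAlgebroid σ A)
    (ξ : Module.Dual R A) (x : A) : P.phiDag (P.phiDagInv ξ) x = ξ x := by simp

theorem PreAlgebroid.phiDagInv_phi_apply (P : PreAlgebroid σ A)
    (ξ : Module.Dual R A) (x : A) : ξ (P.φA x) = σ (P.phiDagInv ξ x) := by simp

namespace HomSchoutenCalc

variable (C : HomSchoutenCalc P S)

/-- `ev` as an additive homomorphism. -/
def evHom {n : ℕ} (ξ : Fin n → Module.Dual R A) : S →+ R :=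
  AddMonoidHom.mk' (fun D => C.ev D ξ) (fun a b => C.ev_add a b ξ)

theorem ev_zero {n : ℕ} (ξ : Fin n → Module.Dual R A) : C.ev (0 : S) ξ = 0 :=
  (C.evHom ξ).map_zero

theorem ev_neg {n : ℕ} (D : S) (ξ : Fin n → Module.Dual R A) :
    C.ev (-D) ξ = -C.ev D ξ := (C.evHom ξ).map_neg D

theorem ev_sub {n : ℕ} (D E : S) (ξ : Fin n → Module.Dual R A) :
    C.ev (D - E) ξ = C.ev D ξ - C.ev E ξ := (C.evHom ξ).map_sub D E

/-- `phi` as an additive homomorphism. -/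
def phiHom : S →+ S := AddMonoidHom.mk' C.phi C.phi_add

theorem phi_zero : C.phi (0 : S) = 0 := C.phiHom.map_zero

/-- `br · E` as an additive homomorphism. -/
def brL (E : S) : S →+ S :=
  AddMonoidHom.mk' (fun D => C.br D E) (fun a b => C.br_add_left a b E)

/-- `br D ·` as an additive homomorphism. -/
def brR (D : S) : S →+ S := AddMonoidHom.mk' (C.br D) (C.br_add_right D)

theorem br_zero_left (E : S) : C.br 0 E = 0 := (C.brL E).map_zero
theorem br_zero_right (D : S) : C.br D 0 = 0 := (C.brR D).map_zero
theorem br_neg_left (D E : S) : C.br (-D) E = -C.br D E := (C.brL E).map_neg D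
theorem br_neg_right (D E : S) : C.br D (-E) = -C.br D E := (C.brR D).map_neg E

/-- `sharp` as an additive homomorphism. -/
def sharpHom : S →+ (Module.Dual R A →ₗ[R] A) := AddMonoidHom.mk' C.sharp C.sharp_add

theorem sharp_zero : C.sharp (0 : S) = 0 := C.sharpHom.map_zero

/-- `wedge · E` as an additive homomorphism. -/
def wedgeL (E : S) : S →+ S :=
  AddMonoidHom.mk' (fun D => C.wedge D E) (fun a b => C.wedge_add_left a b E)

/-- `wedge D ·` as an additive homomorphism. -/
def wedgeR (D : S) : S →+ S :=
  AddMonoidHom.mk' (C.wedge D) (fun a b => C.wedge_add_right D a b)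

theorem wedge_sub_left (D₁ D₂ E : S) :
    C.wedge (D₁ - D₂) E = C.wedge D₁ E - C.wedge D₂ E := (C.wedgeL E).map_sub D₁ D₂

theorem wedge_sub_right (D E₁ E₂ : S) :
    C.wedge D (E₁ - E₂) = C.wedge D E₁ - C.wedge D E₂ := (C.wedgeR D).map_sub E₁ E₂

theorem wedge_ofSec_ofFun_one (X : A) :
    C.wedge (C.ofSec X) (C.ofFun 1) = C.ofSec X := by
  rw [C.wedge_comm (C.ofSec_mem X) (C.ofFun_mem 1), C.wedge_fun_left]
  norm_num

/-- Induction principle for elements of `G 2`: they are sums of wedges of sections. -/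
theorem mem_two_induction {p : S → Prop} (h0 : p 0)
    (hadd : ∀ a b, p a → p b → p (a + b))
    (hw : ∀ u v : A, p (C.wedge (C.ofSec u) (C.ofSec v)))
    {D : S} (hD : D ∈ C.G 2) : p D := by
  set gens : Set S := {x | ∃ u v : A, x = C.wedge (C.ofSec u) (C.ofSec v)} with hgens
  have hsmul : ∀ (r : R) (x : S), x ∈ AddSubmonoid.closure gens →
      r • x ∈ AddSubmonoid.closure gens := by
    intro r x hx
    induction hx using AddSubmonoid.closure_induction with
    | mem y hy =>
      obtain ⟨u, v, rfl⟩ := hy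
      rw [← C.wedge_smul_left, ← map_smul]
      exact AddSubmonoid.subset_closure ⟨r • u, v, rfl⟩
    | zero => rw [smul_zero]; exact AddSubmonoid.zero_mem _
    | add a b _ _ ha hb => rw [smul_add]; exact AddSubmonoid.add_mem _ ha hb
  let N : Submodule R S :=
    { carrier := AddSubmonoid.closure gens
      add_mem' := fun ha hb => AddSubmonoid.add_mem _ ha hb
      zero_mem' := AddSubmonoid.zero_mem _
      smul_mem' := fun r x hx => hsmul r x hx }
  have hDN : D ∈ AddSubmonoid.closure gens := by
    have h1 := C.span_decomp 2 hD
    have h2 : Submodule.span R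
        {D | ∃ v : Fin 2 → A, D = (List.ofFn fun i => C.ofSec (v i)).foldr C.wedge
          (C.ofFun 1)} ≤ N := by
      rw [Submodule.span_le]
      rintro x ⟨v, rfl⟩
      have hfold : (List.ofFn fun i => C.ofSec (v i)).foldr C.wedge (C.ofFun 1)
          = C.wedge (C.ofSec (v 0)) (C.ofSec (v 1)) := by
        simp [List.ofFn_succ, C.wedge_ofSec_ofFun_one]
      rw [hfold]
      exact AddSubmonoid.subset_closure ⟨v 0, v 1, rfl⟩
    exact h2 h1
  refine AddSubmonoid.closure_induction ?_ h0 (fun a b _ _ ha hb => hadd a b ha hb) hDN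
  rintro x ⟨u, v, rfl⟩
  exact hw u v

theorem ev_gen (x y : A) (ξ η : Module.Dual R A) :
    C.ev (C.wedge (C.ofSec x) (C.ofSec y)) ![ξ, η] = ξ x * η y - ξ y * η x := by
  have hm : C.wedge (C.ofSec x) (C.ofSec y) ∈ C.G 2 :=
    C.wedge_mem (C.ofSec_mem x) (C.ofSec_mem y)
  rw [C.ev_two hm]
  simp only [Matrix.cons_val_one, Matrix.head_cons, Matrix.cons_val_zero,
    C.sharp_wedge, map_sub, map_smul, smul_eq_mul]

theorem sharp_antisym {D : S} (hD : D ∈ C.G 2) (γ δ : Module.Dual R A) :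
    δ (C.sharp D γ) = - γ (C.sharp D δ) := by
  have key : ∀ γ δ : Module.Dual R A, δ (C.sharp D γ) + γ (C.sharp D δ) = 0 := by
    refine C.mem_two_induction
      (p := fun E => ∀ γ δ : Module.Dual R A, δ (C.sharp E γ) + γ (C.sharp E δ) = 0)
      ?_ ?_ ?_ hD
    · intro γ δ; rw [C.sharp_zero]; simp
    · intro a b ha hb γ δ
      rw [C.sharp_add]
      have h1 := ha γ δ
      have h2 := hb γ δ
      simp only [LinearMap.add_apply, map_add]
      linear_combination h1 + h2
    · intro u v γ δ
      rw [C.sharp_wedge, C.sharp_wedge]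
      simp only [map_sub, map_smul, smul_eq_mul]
      ring
  linear_combination key γ δ

theorem sharp_phi {D : S} (hD : D ∈ C.G 2) (γ : Module.Dual R A) :
    C.sharp (C.phi D) γ = P.φA (C.sharp D (P.phiDagInv γ)) := by
  refine C.mem_two_induction
    (p := fun E => ∀ γ : Module.Dual R A,
      C.sharp (C.phi E) γ = P.φA (C.sharp E (P.phiDagInv γ)))
    ?_ ?_ ?_ hD γ
  · intro γ; rw [C.phi_zero, C.sharp_zero]; simp
  · intro a b ha hb γ
    rw [C.phi_add, C.sharp_add, C.sharp_add]
    simp only [LinearMap.add_apply, map_add, ha γ, hb γ]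
  · intro u v γ
    rw [C.phi_wedge, C.phi_ofSec, C.phi_ofSec, C.sharp_wedge, C.sharp_wedge]
    rw [map_sub, P.φA_smul, P.φA_smul]
    simp

theorem brZ_wedge (hP : P.IsHomLie) (Z u v : A) :
    C.br (C.ofSec Z) (C.wedge (C.ofSec u) (C.ofSec v)) =
      C.wedge (C.ofSec (P.bracket Z u)) (C.ofSec (P.φA v)) +
        C.wedge (C.ofSec (P.φA u)) (C.ofSec (P.bracket Z v)) := by
  rw [C.br_wedge (C.ofSec v) (C.ofSec_mem Z) (C.ofSec_mem u), C.br_XY, C.br_XY,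
    C.phi_ofSec, C.phi_ofSec]
  norm_num

theorem skew21 {D : S} (hD : D ∈ C.G 2) (Z : A) :
    C.br D (C.ofSec Z) = - C.br (C.ofSec Z) D := by
  rw [C.br_skew hD (C.ofSec_mem Z)]
  norm_num

/-- The key evaluation formula for `br (ofSec Z) W`, `W ∈ G 2`. -/
theorem ev_br_sec (hP : P.IsHomLie) (Z : A) {W : S} (hW : W ∈ C.G 2)
    (ξ η : Module.Dual R A) :
    C.ev (C.br (C.ofSec Z) W) ![ξ, η] =
      P.anchor (P.φA Z) (C.ev W ![P.phiDagInv ξ, P.phiDagInv η])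
        - C.ev (C.phi W) ![P.lie hP Z (P.phiDagInv ξ), η]
        + C.ev (C.phi W) ![P.lie hP Z (P.phiDagInv η), ξ] := by
  have key : ∀ (γ : Module.Dual R A) (w : A), γ (P.bracket Z w) =
      P.anchor (P.φA Z) (P.phiDagInv γ w) - P.lie hP Z (P.phiDagInv γ) (P.φA w) := by
    intro γ w
    rw [P.lie_apply]
    simp
  refine C.mem_two_induction
    (p := fun E => C.ev (C.br (C.ofSec Z) E) ![ξ, η] =
      P.anchor (P.φA Z) (C.ev E ![P.phiDagInv ξ, P.phiDagInv η])
        - C.ev (C.phi E) ![P.lie hP Z (P.phiDagInv ξ), η]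
        + C.ev (C.phi E) ![P.lie hP Z (P.phiDagInv η), ξ])
    ?_ ?_ ?_ hW
  · rw [C.br_zero_right, C.phi_zero]
    rw [C.ev_zero, C.ev_zero, C.ev_zero, C.ev_zero]
    simp
  · intro a b ha hb
    rw [C.br_add_right, C.phi_add, C.ev_add, C.ev_add, C.ev_add, C.ev_add, ha, hb,
      SDeriv.map_add]
    ring
  · intro u v
    rw [C.brZ_wedge hP Z u v, C.ev_add, C.ev_gen, C.ev_gen,
      C.phi_wedge, C.phi_ofSec, C.phi_ofSec, C.ev_gen, C.ev_gen, C.ev_gen,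
      key ξ u, key ξ v, key η u, key η v,
      SDeriv.map_sub, SDeriv.leibniz, SDeriv.leibniz,
      P.phiDagInv_phi_apply ξ u, P.phiDagInv_phi_apply ξ v,
      P.phiDagInv_phi_apply η u, P.phiDagInv_phi_apply η v]
    ring

/-- Graded Hom-Jacobi identity in degrees `(2,1,1)`. -/
theorem jacobi2 (hP : P.IsHomLie) {D : S} (hD : D ∈ C.G 2) (X Y : A) :
    C.br (C.phi D) (C.ofSec (P.bracket X Y)) =
      C.br (C.br D (C.ofSec X)) (C.ofSec (P.φA Y)) +
        C.br (C.ofSec (P.φA X)) (C.br D (C.ofSec Y)) := by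
  obtain ⟨hbl, hbr2, hskew, hφbr, hjac, hlei, haφ, habr⟩ := id hP
  have hbneg : ∀ Z W : A, P.bracket Z (-W) = -P.bracket Z W := fun Z W =>
    (AddMonoidHom.mk' (P.bracket Z) (hbr2 Z)).map_neg W
  have jacD : ∀ w : A, P.bracket (P.bracket X Y) (P.φA w)
      = P.bracket (P.φA X) (P.bracket Y w) - P.bracket (P.φA Y) (P.bracket X w) := by
    intro w
    have h := hjac X Y w
    rw [hskew w X, hbneg, hskew (P.φA w) (P.bracket X Y)] at h
    rw [← sub_eq_zero]
    have h4 : P.bracket (P.bracket X Y) (P.φA w) -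
        (P.bracket (P.φA X) (P.bracket Y w) - P.bracket (P.φA Y) (P.bracket X w)) =
        -(P.bracket (P.φA X) (P.bracket Y w) + -P.bracket (P.φA Y) (P.bracket X w) +
          -P.bracket (P.bracket X Y) (P.φA w)) := by abel
    rw [h4, h, neg_zero]
  refine C.mem_two_induction
    (p := fun E => C.br (C.phi E) (C.ofSec (P.bracket X Y)) =
      C.br (C.br E (C.ofSec X)) (C.ofSec (P.φA Y)) +
        C.br (C.ofSec (P.φA X)) (C.br E (C.ofSec Y))) ?_ ?_ ?_ hD
  · simp [C.phi_zero, C.br_zero_left, C.br_zero_right]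
  · intro a b ha hb
    rw [C.phi_add, C.br_add_left, C.br_add_left, C.br_add_left, C.br_add_left, C.br_add_right, ha, hb]
    abel
  · intro u v
    rw [C.phi_wedge, C.phi_ofSec, C.phi_ofSec,
      C.skew21 (C.wedge_mem (C.ofSec_mem (P.φA u)) (C.ofSec_mem (P.φA v))) (P.bracket X Y),
      C.brZ_wedge hP (P.bracket X Y) (P.φA u) (P.φA v),
      C.skew21 (C.wedge_mem (C.ofSec_mem u) (C.ofSec_mem v)) X,
      C.skew21 (C.wedge_mem (C.ofSec_mem u) (C.ofSec_mem v)) Y,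
      C.brZ_wedge hP X u v, C.brZ_wedge hP Y u v,
      C.br_neg_left, C.br_add_left, C.br_neg_right, C.br_add_right,
      C.skew21 (C.wedge_mem (C.ofSec_mem (P.bracket X u)) (C.ofSec_mem (P.φA v))) (P.φA Y),
      C.skew21 (C.wedge_mem (C.ofSec_mem (P.φA u)) (C.ofSec_mem (P.bracket X v))) (P.φA Y),
      C.brZ_wedge hP (P.φA Y) (P.bracket X u) (P.φA v),
      C.brZ_wedge hP (P.φA Y) (P.φA u) (P.bracket X v),
      C.brZ_wedge hP (P.φA X) (P.bracket Y u) (P.φA v),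
      C.brZ_wedge hP (P.φA X) (P.φA u) (P.bracket Y v)]
    simp only [← hφbr]
    rw [jacD u, jacD v]
    simp only [map_sub]
    rw [C.wedge_sub_left, C.wedge_sub_right]
    abel

end HomSchoutenCalc

end Aux

/-- Let `π` be a Hom-Poisson structure on a Hom-Lie algebroid `A`.  If the
set `{d_π f | f ∈ C^∞(M)}` generates `Γ(A)` as a `C^∞(M)`-module (where `d_π` is the
differential of the Hom-Lie algebroid `A^*_π`, so that `⟨d_π f, ξ⟩ = (a_A ∘ π^♯)(ξ)(f)`),
then `(A, A^*_π)` is a Hom-Lie bialgebroid, i.e.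
`d_{A^*}[X,Y]_A = [d_{A^*}X, φ_A(Y)]_A + [φ_A(X), d_{A^*}Y]_A`, where `d_{A^*}` is the
differential of `A^*_π` (represented by `dstar : Γ(A) → Γ(Λ²A)` below) and the right-hand
brackets are Hom-Schouten brackets on `Γ(Λ^•A)`. -/
theorem hom_poisson_gives_hom_lie_bialgebroid
    {R : Type} [CommRing R] {σ : R ≃+* R} {A : Type} [AddCommGroup A] [Module R A]
    (P : PreAlgebroid σ A) (hP : P.IsHomLie)
    {S : Type} [AddCommGroup S] [Module R S] (C : HomSchoutenCalc P S)
    (π : S) (hπ : π ∈ C.G 2) (hpoisson : C.br π π = 0) (hinv : C.phi π = π)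
    -- `dstar X` represents the 2-section `d_{A^*_π} X ∈ Γ(Λ²A)`:
    (dstar : A → S) (hdmem : ∀ X, dstar X ∈ C.G 2)
    (hdev : ∀ (X : A) (ξ η : Module.Dual R A),
      C.ev (dstar X) ![ξ, η] =
        P.anchor (C.sharp π ξ) (P.phiDagInv η X) - P.anchor (C.sharp π η) (P.phiDagInv ξ X)
          - (P.piBr hP (C.sharp π) (P.phiDagInv ξ) (P.phiDagInv η)) (P.φA X))
    -- the sections `d_π f` generate `Γ(A)` as a `C^∞(M)`-module:
    (hgen : Submodule.span R
      {x : A | ∃ f : R, ∀ ξ : Module.Dual R A, ξ x = P.anchor (C.sharp π ξ) f} = ⊤) :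
    ∀ X Y : A, dstar (P.bracket X Y) =
      C.br (dstar X) (C.ofSec (P.φA Y)) + C.br (C.ofSec (P.φA X)) (dstar Y) := by
  have evπ : ∀ γ δ : Module.Dual R A, C.ev π ![γ, δ] = δ (C.sharp π γ) := by
    intro γ δ; rw [C.ev_two hπ]; simp
  have hshφ : ∀ γ : Module.Dual R A, P.φA (C.sharp π (P.phiDagInv γ)) = C.sharp π γ := by
    intro γ
    have h := C.sharp_phi hπ γ
    rw [hinv] at h
    exact h.symm
  have hsymm : ∀ γ : Module.Dual R A,
      P.φA.symm (C.sharp π γ) = C.sharp π (P.phiDagInv γ) := by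
    intro γ; rw [← hshφ γ]; simp
  obtain ⟨hbl, hbr2, hskew, hφbr, hjac, hlei, haφ, habr⟩ := id hP
  have hstar : ∀ X : A, dstar X = C.br π (C.ofSec X) := by
    intro X
    have hbm : C.br π (C.ofSec X) ∈ C.G 2 := C.br_mem hπ (C.ofSec_mem X)
    have hπX : C.br π (C.ofSec X) = - C.br (C.ofSec X) π := C.skew21 hπ X
    have hmem : dstar X - C.br π (C.ofSec X) ∈ C.G 2 :=
      Submodule.sub_mem _ (hdmem X) hbm
    have hzero : ∀ ζ : Fin 2 → Module.Dual R A,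
        C.ev (dstar X - C.br π (C.ofSec X)) ζ = 0 := by
      intro ζ
      have hζ : ζ = ![ζ 0, ζ 1] := by
        funext i; fin_cases i <;> rfl
      rw [hζ, C.ev_sub, hπX, C.ev_neg, C.ev_br_sec hP X hπ (ζ 0) (ζ 1),
        hdev X (ζ 0) (ζ 1), hinv, evπ, evπ, evπ,
        C.sharp_antisym hπ (P.lie hP X (P.phiDagInv (ζ 0))) (ζ 1),
        C.sharp_antisym hπ (P.lie hP X (P.phiDagInv (ζ 1))) (ζ 0)]
      simp only [PreAlgebroid.piBr, LinearMap.sub_apply, PreAlgebroid.lie_apply,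
        PreAlgebroid.dZero_apply, AddEquiv.symm_apply_apply, hsymm,
        P.phiDag_phiDagInv_apply, hshφ]
      rw [C.sharp_antisym hπ (P.phiDagInv (ζ 1)) (P.phiDagInv (ζ 0)),
        hskew X (C.sharp π (P.phiDagInv (ζ 1))), hskew X (C.sharp π (P.phiDagInv (ζ 0)))]
      simp only [map_neg, SDeriv.map_neg]
      ring
    have h0 := C.ev_nondeg _ hmem hzero
    exact sub_eq_zero.mp h0
  intro X Y
  rw [hstar (P.bracket X Y), hstar X, hstar Y]
  have h := C.jacobi2 hP hπ X Y
  rw [hinv] at h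
  exact h

end HomPaper
end

section
/- Let (A, φ, φ_A, [·,·]_A, a_A) be a Hom-Lie algebroid and π ∈ Γ(Λ²A) a φ_A-invariant 2-section (φ_A(π) = π). Then for all α, β ∈ Γ(A*), (1/2)[π,π]_A(φ_A^†(α), φ_A^†(β), ·) = [π^♯α, π^♯β]_A − π^♯[α, β]_π, where [·,·]_A on the left is the Hom-Schouten bracket and [α,β]_π := L^A_{π^♯α}β − L^A_{π^♯β}α − d_A⟨π^♯α, β⟩. -/
set_option maxHeartbeats 1000000

namespace HomPaper

variable {R : Type} [CommRing R]

section Statement8Aux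

variable {R : Type} [CommRing R] {σ : R ≃+* R}
  {A : Type} [AddCommGroup A] [Module R A]
  {S : Type} [AddCommGroup S] [Module R S]

@[simp] theorem SDeriv.sub_apply (X Y : SDeriv R σ) (a : R) : (X - Y) a = X a - Y a := by
  rw [sub_eq_add_neg, SDeriv.add_apply, SDeriv.neg_apply, sub_eq_add_neg]

variable (P : PreAlgebroid σ A)

theorem bk_zero_left (hP : P.IsHomLie) (Z : A) : P.bracket 0 Z = 0 := by
  have h := hP.1 0 0 Z
  rw [add_zero] at h
  exact right_eq_add.mp h

theorem bk_zero_right (hP : P.IsHomLie) (Z : A) : P.bracket Z 0 = 0 := by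
  have h := hP.2.1 Z 0 0
  rw [add_zero] at h
  exact right_eq_add.mp h

theorem bk_neg_left (hP : P.IsHomLie) (X Z : A) : P.bracket (-X) Z = -P.bracket X Z := by
  have h := hP.1 X (-X) Z
  rw [add_neg_cancel, bk_zero_left P hP] at h
  refine eq_neg_of_add_eq_zero_left ?_
  rw [add_comm]
  exact h.symm

theorem bk_neg_right (hP : P.IsHomLie) (X Z : A) : P.bracket Z (-X) = -P.bracket Z X := by
  have h := hP.2.1 Z X (-X)
  rw [add_neg_cancel, bk_zero_right P hP] at h
  refine eq_neg_of_add_eq_zero_left ?_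
  rw [add_comm]
  exact h.symm

theorem bk_sub_left (hP : P.IsHomLie) (X Y Z : A) :
    P.bracket (X - Y) Z = P.bracket X Z - P.bracket Y Z := by
  rw [sub_eq_add_neg, hP.1, bk_neg_left P hP, sub_eq_add_neg]

theorem bk_sub_right (hP : P.IsHomLie) (X Y Z : A) :
    P.bracket Z (X - Y) = P.bracket Z X - P.bracket Z Y := by
  rw [sub_eq_add_neg, hP.2.1, bk_neg_right P hP, sub_eq_add_neg]

theorem bk_smul_left (hP : P.IsHomLie) (f : R) (U V : A) :
    P.bracket (f • U) V =
      σ f • P.bracket U V - P.anchor (P.φA V) f • P.φA U := by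
  obtain ⟨hbl, hbr, hskew, hφbr, hjac, hlei, haφ, habr⟩ := hP
  rw [hskew (f • U) V, hlei V f U, hskew V U]
  module

theorem dZero_add (f g : R) : P.dZero (f + g) = P.dZero f + P.dZero g := by
  ext X; simp

theorem dZero_zero : P.dZero 0 = 0 := by
  ext X; simp

theorem lie_add_left (hP : P.IsHomLie) (X₁ X₂ : A) (ξ : Module.Dual R A) :
    P.lie hP (X₁ + X₂) ξ = P.lie hP X₁ ξ + P.lie hP X₂ ξ := by
  ext Y
  simp only [PreAlgebroid.lie_apply, LinearMap.add_apply, map_add, hP.1,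
    SDeriv.add_apply]
  ring

theorem lie_zero_left (hP : P.IsHomLie) (ξ : Module.Dual R A) :
    P.lie hP 0 ξ = 0 := by
  ext Y
  simp [PreAlgebroid.lie_apply, bk_zero_left P hP]

theorem piBr_add_sh (hP : P.IsHomLie) (sh₁ sh₂ : Module.Dual R A →ₗ[R] A)
    (α β : Module.Dual R A) :
    P.piBr hP (sh₁ + sh₂) α β = P.piBr hP sh₁ α β + P.piBr hP sh₂ α β := by
  simp only [PreAlgebroid.piBr, LinearMap.add_apply, lie_add_left P hP, map_add,
    dZero_add]
  abel

theorem piBr_zero_sh (hP : P.IsHomLie) (α β : Module.Dual R A) :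
    P.piBr hP 0 α β = 0 := by
  simp [PreAlgebroid.piBr, lie_zero_left P hP, dZero_zero]

variable (C : HomSchoutenCalc P S)

theorem br_zero_left (E : S) : C.br 0 E = 0 := by
  have h := C.br_add_left 0 0 E
  rw [add_zero] at h
  exact right_eq_add.mp h

theorem br_zero_right (E : S) : C.br E 0 = 0 := by
  have h := C.br_add_right E 0 0
  rw [add_zero] at h
  exact right_eq_add.mp h

theorem sharp_zero : C.sharp 0 = 0 := by
  have h := C.sharp_add 0 0
  rw [add_zero] at h
  exact right_eq_add.mp h

theorem phi_zero : C.phi 0 = 0 := by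
  have h := C.phi_add 0 0
  rw [add_zero] at h
  exact right_eq_add.mp h

theorem sharp3_zero (α β : Module.Dual R A) : C.sharp3 0 α β = 0 := by
  have h := C.sharp3_add 0 0 α β
  rw [add_zero] at h
  exact right_eq_add.mp h

theorem sharp3_neg (D : S) (α β : Module.Dual R A) :
    C.sharp3 (-D) α β = -C.sharp3 D α β := by
  have h := C.sharp3_add D (-D) α β
  rw [add_neg_cancel, sharp3_zero] at h
  refine eq_neg_of_add_eq_zero_left ?_
  rw [add_comm]
  exact h.symm

theorem sharp3_sub (D E : S) (α β : Module.Dual R A) :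
    C.sharp3 (D - E) α β = C.sharp3 D α β - C.sharp3 E α β := by
  rw [sub_eq_add_neg, C.sharp3_add, sharp3_neg, sub_eq_add_neg]

theorem wedge_zero_left (E : S) : C.wedge 0 E = 0 := by
  have h := C.wedge_add_left 0 0 E
  rw [add_zero] at h
  exact right_eq_add.mp h

theorem wedge_neg_left (D E : S) : C.wedge (-D) E = -C.wedge D E := by
  have h := C.wedge_add_left D (-D) E
  rw [add_neg_cancel, wedge_zero_left] at h
  refine eq_neg_of_add_eq_zero_left ?_
  rw [add_comm]
  exact h.symm

theorem wedge_zero_right (E : S) : C.wedge E 0 = 0 := by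
  have h := C.wedge_add_right E 0 0
  rw [add_zero] at h
  exact right_eq_add.mp h

theorem wedge_neg_right (D E : S) : C.wedge E (-D) = -C.wedge E D := by
  have h := C.wedge_add_right E D (-D)
  rw [add_neg_cancel, wedge_zero_right] at h
  refine eq_neg_of_add_eq_zero_left ?_
  rw [add_comm]
  exact h.symm

theorem wedge_ofFun_one (Y : A) : C.wedge (C.ofSec Y) (C.ofFun 1) = C.ofSec Y := by
  rw [C.wedge_comm (C.ofSec_mem Y) (C.ofFun_mem 1)]
  simp [C.wedge_fun_left]

theorem foldr_two (v : Fin 2 → A) :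
    (List.ofFn fun i => C.ofSec (v i)).foldr C.wedge (C.ofFun 1) =
      C.wedge (C.ofSec (v 0)) (C.ofSec (v 1)) := by
  simp [List.ofFn_succ, wedge_ofFun_one]

/-- The "polarized" bilinear right-hand side. -/
def RHSbi (hP : P.IsHomLie) (x y : S) (α β : Module.Dual R A) : A :=
  P.bracket (C.sharp x α) (C.sharp y β) + P.bracket (C.sharp y α) (C.sharp x β)
    - C.sharp (C.phi x) (P.piBr hP (C.sharp y) α β)
    - C.sharp (C.phi y) (P.piBr hP (C.sharp x) α β)

theorem RHSbi_comm (hP : P.IsHomLie) (x y : S) (α β : Module.Dual R A) :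
    RHSbi P C hP x y α β = RHSbi P C hP y x α β := by
  unfold RHSbi
  abel

theorem RHSbi_zero_left (hP : P.IsHomLie) (y : S) (α β : Module.Dual R A) :
    RHSbi P C hP 0 y α β = 0 := by
  unfold RHSbi
  rw [sharp_zero, phi_zero, sharp_zero]
  simp [piBr_zero_sh P hP, bk_zero_left P hP, bk_zero_right P hP]

theorem RHSbi_add_left (hP : P.IsHomLie) (x x' y : S) (α β : Module.Dual R A) :
    RHSbi P C hP (x + x') y α β = RHSbi P C hP x y α β + RHSbi P C hP x' y α β := by
  unfold RHSbi
  rw [C.sharp_add, C.phi_add, C.sharp_add]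
  simp only [LinearMap.add_apply, hP.1, hP.2.1, piBr_add_sh P hP, map_add]
  abel

theorem RHSbi_zero_right (hP : P.IsHomLie) (y : S) (α β : Module.Dual R A) :
    RHSbi P C hP y 0 α β = 0 := by
  rw [RHSbi_comm, RHSbi_zero_left]

theorem RHSbi_add_right (hP : P.IsHomLie) (x y y' : S) (α β : Module.Dual R A) :
    RHSbi P C hP x (y + y') α β = RHSbi P C hP x y α β + RHSbi P C hP x y' α β := by
  rw [RHSbi_comm, RHSbi_add_left, RHSbi_comm P C hP y, RHSbi_comm P C hP y']

theorem closure_smul_mem {s : Set S} (hs : ∀ (f : R), ∀ x ∈ s, f • x ∈ s) (f : R) {x : S}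
    (hx : x ∈ AddSubmonoid.closure s) : f • x ∈ AddSubmonoid.closure s := by
  refine AddSubmonoid.closure_induction
    (fun y hy => AddSubmonoid.subset_closure (hs f y hy)) ?_ ?_ hx
  · rw [smul_zero]; exact zero_mem _
  · intro a b _ _ ha hb
    rw [smul_add]; exact add_mem ha hb

theorem span_sub_closure {s : Set S} (hs : ∀ (f : R), ∀ x ∈ s, f • x ∈ s) {x : S}
    (hx : x ∈ Submodule.span R s) : x ∈ AddSubmonoid.closure s := by
  refine Submodule.span_induction (fun y hy => AddSubmonoid.subset_closure hy)
    (zero_mem _) (fun a b _ _ ha hb => add_mem ha hb)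
    (fun f y _ hy => closure_smul_mem hs f hy) hx

/-- **Core computation**: the polarized identity for decomposable 2-sections. -/
theorem core (hP : P.IsHomLie) (X Y Z W : A) (α β : Module.Dual R A) :
    C.sharp3 (C.br (C.wedge (C.ofSec X) (C.ofSec Y)) (C.wedge (C.ofSec Z) (C.ofSec W)))
        (P.phiDag α) (P.phiDag β) =
      RHSbi P C hP (C.wedge (C.ofSec X) (C.ofSec Y)) (C.wedge (C.ofSec Z) (C.ofSec W)) α β := by
  have h := id hP
  obtain ⟨hbl, hbr, hskew, hφbr, hjac, hlei, haφ, habr⟩ := h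
  have e1 : ∀ a b : A, C.wedge (C.ofSec a) (C.ofSec b) ∈ C.G (1 + 1) :=
    fun a b => C.wedge_mem (C.ofSec_mem a) (C.ofSec_mem b)
  have brZw : ∀ u a b : A, C.br (C.ofSec u) (C.wedge (C.ofSec a) (C.ofSec b)) =
      C.wedge (C.ofSec (P.bracket u a)) (C.ofSec (P.φA b)) +
        C.wedge (C.ofSec (P.φA a)) (C.ofSec (P.bracket u b)) := by
    intro u a b
    rw [C.br_wedge (C.ofSec b) (C.ofSec_mem u) (C.ofSec_mem a), C.br_XY, C.br_XY,
      C.phi_ofSec, C.phi_ofSec]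
    norm_num
  have brwZ : ∀ a b u : A, C.br (C.wedge (C.ofSec a) (C.ofSec b)) (C.ofSec u) =
      -(C.wedge (C.ofSec (P.bracket u a)) (C.ofSec (P.φA b))) -
        C.wedge (C.ofSec (P.φA a)) (C.ofSec (P.bracket u b)) := by
    intro a b u
    rw [C.br_skew (e1 a b) (C.ofSec_mem u), brZw]
    norm_num
    abel
  have hbig : C.br (C.wedge (C.ofSec X) (C.ofSec Y)) (C.wedge (C.ofSec Z) (C.ofSec W)) =
      -(C.wedge (C.wedge (C.ofSec (P.bracket Z X)) (C.ofSec (P.φA Y))) (C.ofSec (P.φA W))) -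
        C.wedge (C.wedge (C.ofSec (P.φA X)) (C.ofSec (P.bracket Z Y))) (C.ofSec (P.φA W)) +
        C.wedge (C.ofSec (P.φA Z)) (C.wedge (C.ofSec (P.bracket W X)) (C.ofSec (P.φA Y))) +
        C.wedge (C.ofSec (P.φA Z)) (C.wedge (C.ofSec (P.φA X)) (C.ofSec (P.bracket W Y))) := by
    rw [C.br_wedge (C.ofSec W) (e1 X Y) (C.ofSec_mem Z), brwZ, brwZ, C.phi_ofSec,
      C.phi_ofSec]
    simp only [sub_eq_add_neg, C.wedge_add_left, wedge_neg_left P C, C.wedge_add_right,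
      wedge_neg_right P C]
    norm_num
    abel
  rw [hbig]
  simp only [sub_eq_add_neg]
  rw [C.sharp3_add, C.sharp3_add, C.sharp3_add, sharp3_neg, sharp3_neg]
  rw [C.wedge_assoc, C.wedge_assoc]
  rw [C.sharp3_wedge, C.sharp3_wedge, C.sharp3_wedge, C.sharp3_wedge]
  unfold RHSbi
  rw [C.phi_wedge, C.phi_wedge, C.phi_ofSec, C.phi_ofSec, C.phi_ofSec, C.phi_ofSec]
  simp only [C.sharp_wedge, PreAlgebroid.piBr, LinearMap.sub_apply,
    PreAlgebroid.lie_apply, PreAlgebroid.dZero_apply, bk_sub_left P hP,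
    bk_sub_right P hP, bk_smul_left P hP, hlei, map_add, map_sub, map_smul, map_neg,
    P.φA_smul, P.φA_symm_smul, PreAlgebroid.phiDag_apply, AddEquiv.symm_apply_apply,
    SDeriv.add_apply, SDeriv.sub_apply, SDeriv.smul_apply, SDeriv.neg_apply,
    SDeriv.map_add, SDeriv.map_sub, SDeriv.map_neg, SDeriv.leibniz, smul_eq_mul,
    map_mul, map_one]
  simp only [hskew Y W, hskew Y Z, hskew X W, hskew X Z, map_neg, map_sub, map_add,
    map_smul, map_mul, smul_eq_mul, mul_neg, neg_mul, P.φA_symm_smul]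
  match_scalars <;> ring

theorem star_closure (hP : P.IsHomLie) :
    ∀ x ∈ AddSubmonoid.closure {D : S | ∃ v : Fin 2 → A,
        D = (List.ofFn fun i => C.ofSec (v i)).foldr C.wedge (C.ofFun 1)},
      ∀ y ∈ AddSubmonoid.closure {D : S | ∃ v : Fin 2 → A,
        D = (List.ofFn fun i => C.ofSec (v i)).foldr C.wedge (C.ofFun 1)},
      ∀ α β : Module.Dual R A,
        C.sharp3 (C.br x y) (P.phiDag α) (P.phiDag β) = RHSbi P C hP x y α β := by
  intro x hx
  refine AddSubmonoid.closure_induction ?_ ?_ ?_ hx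
  · -- x a generator
    rintro x' ⟨v, rfl⟩ y hy α β
    rw [foldr_two]
    induction hy using AddSubmonoid.closure_induction with
    | mem z hz =>
      obtain ⟨u, rfl⟩ := hz
      rw [foldr_two]
      exact core P C hP _ _ _ _ α β
    | zero =>
      rw [br_zero_right, sharp3_zero, RHSbi_zero_right]
    | add a b _ _ iha ihb =>
      rw [C.br_add_right, C.sharp3_add, iha, ihb, RHSbi_add_right]
  · intro y hy α β
    rw [br_zero_left, sharp3_zero, RHSbi_zero_left]
  · intro a b _ _ iha ihb y hy α β
    rw [C.br_add_left, C.sharp3_add, iha y hy, ihb y hy, RHSbi_add_left]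

end Statement8Aux

/-- Let `(A, φ, φ_A, [·,·]_A, a_A)` be a Hom-Lie algebroid and `π ∈ Γ(Λ²A)`
a `φ_A`-invariant 2-section.  Then for all `α, β ∈ Γ(A^*)`,
`(1/2)[π,π]_A(φ_A^†(α), φ_A^†(β), ·) = [π^♯α, π^♯β]_A − π^♯[α, β]_π`. -/
theorem half_schouten_pi_pi_contraction
    {R : Type} [CommRing R] [Invertible (2 : R)] {σ : R ≃+* R}
    {A : Type} [AddCommGroup A] [Module R A]
    (P : PreAlgebroid σ A) (hP : P.IsHomLie)
    {S : Type} [AddCommGroup S] [Module R S] (C : HomSchoutenCalc P S)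
    (π : S) (hπ : π ∈ C.G 2) (hinv : C.phi π = π) :
    ∀ α β : Module.Dual R A,
      (⅟(2 : R)) • C.sharp3 (C.br π π) (P.phiDag α) (P.phiDag β) =
        P.bracket (C.sharp π α) (C.sharp π β) - C.sharp π (P.piBr hP (C.sharp π) α β) := by
  intro α β
  have hsmul : ∀ (f : R), ∀ x ∈ {D : S | ∃ v : Fin 2 → A,
      D = (List.ofFn fun i => C.ofSec (v i)).foldr C.wedge (C.ofFun 1)},
      f • x ∈ {D : S | ∃ v : Fin 2 → A,
      D = (List.ofFn fun i => C.ofSec (v i)).foldr C.wedge (C.ofFun 1)} := by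
    rintro f x ⟨v, rfl⟩
    refine ⟨![f • v 0, v 1], ?_⟩
    rw [foldr_two, foldr_two]
    simp only [Matrix.cons_val_zero, Matrix.cons_val_one, Matrix.head_cons, map_smul]
    rw [C.wedge_smul_left]
  have hmem : π ∈ AddSubmonoid.closure {D : S | ∃ v : Fin 2 → A,
      D = (List.ofFn fun i => C.ofSec (v i)).foldr C.wedge (C.ofFun 1)} :=
    span_sub_closure hsmul (C.span_decomp 2 hπ)
  have key := star_closure P C hP π hmem π hmem α β
  rw [key]
  unfold RHSbi
  rw [hinv]
  have h2 : P.bracket (C.sharp π α) (C.sharp π β) + P.bracket (C.sharp π α) (C.sharp π β)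
      - C.sharp π (P.piBr hP (C.sharp π) α β) - C.sharp π (P.piBr hP (C.sharp π) α β) =
      (2 : R) • (P.bracket (C.sharp π α) (C.sharp π β) -
        C.sharp π (P.piBr hP (C.sharp π) α β)) := by
    rw [two_smul]; abel
  rw [h2, invOf_smul_smul]

end HomPaper
end

section
/- Let N be a Hom-Nijenhuis structure on a Hom-Lie algebroid (A, φ, φ_A, [·,·]_A, a_A). Then A_N = (A, φ, φ_A, [·,·]_N, a_A ∘ N) is a Hom-Lie algebroid, where [X,Y]_N := [NX, Y]_A + [X, NY]_A − N[X,Y]_A. -/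
set_option maxHeartbeats 1000000

namespace HomPaper

variable {R : Type} [CommRing R]

/-- Let `N` be a Hom-Nijenhuis structure on a Hom-Lie algebroid
`(A, φ, φ_A, [·,·]_A, a_A)` (its Nijenhuis torsion vanishes and `φ_A(N) = N`).  Then
`A_N = (A, φ, φ_A, [·,·]_N, a_A ∘ N)` is a Hom-Lie algebroid, where
`[X,Y]_N := [NX,Y]_A + [X,NY]_A − N[X,Y]_A`. -/
theorem hom_nijenhuis_deformed_algebroid
    {R : Type} [CommRing R] {σ : R ≃+* R} {A : Type} [AddCommGroup A] [Module R A]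
    (P : PreAlgebroid σ A) (hP : P.IsHomLie) (N : A →ₗ[R] A)
    (htorsion : ∀ X Y : A, P.torsion N X Y = 0) (hinv : P.phiEnd N = N) :
    IsHomLieAlgebroidRaw σ (⇑P.φA) (P.bracketN N) (fun X : A => P.anchor (N X)) := by
  obtain ⟨hbl, hbr, hskew, hφbr, hjac, hlei, haφ, habr⟩ := hP
  -- N commutes with φA
  have hNφ : ∀ X : A, P.φA (N X) = N (P.φA X) := by
    intro X
    have h := LinearMap.congr_fun hinv (P.φA X)
    simpa using h
  -- subtraction lemmas for the bracket
  have hbsubr : ∀ U V W : A, P.bracket U (V - W) = P.bracket U V - P.bracket U W := by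
    intro U V W
    have h := hbr U (V - W) W
    rw [show V - W + W = V from by abel] at h
    exact eq_sub_of_add_eq h.symm
  have hbsubl : ∀ U V W : A, P.bracket (U - V) W = P.bracket U W - P.bracket V W := by
    intro U V W
    have h := hbl (U - V) V W
    rw [show U - V + V = U from by abel] at h
    exact eq_sub_of_add_eq h.symm
  -- torsion in equational form
  have hT : ∀ U V : A, P.bracket (N U) (N V) =
      N (P.bracket (N U) V) + N (P.bracket U (N V)) - N (N (P.bracket U V)) := by
    intro U V
    have h := htorsion U V
    unfold PreAlgebroid.torsion at h
    have h2 : P.bracket (N U) (N V) -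
        (N (P.bracket (N U) V) + N (P.bracket U (N V)) - N (N (P.bracket U V))) = 0 := by
      rw [← h]; abel
    exact sub_eq_zero.mp h2
  -- N of the deformed bracket
  have hW : ∀ Y Z : A, N (P.bracketN N Y Z) = P.bracket (N Y) (N Z) := by
    intro Y Z
    unfold PreAlgebroid.bracketN
    rw [map_sub, map_add, hT Y Z]
  -- key expansion of the deformed double bracket
  have key : ∀ X Y Z : A, P.bracketN N (P.φA X) (P.bracketN N Y Z) =
      P.bracket (N (P.φA X)) (P.bracket (N Y) Z)
      + P.bracket (N (P.φA X)) (P.bracket Y (N Z))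
      + P.bracket (P.φA X) (P.bracket (N Y) (N Z))
      - N (P.bracket (N (P.φA X)) (P.bracket Y Z))
      - N (P.bracket (P.φA X) (P.bracket (N Y) Z))
      - N (P.bracket (P.φA X) (P.bracket Y (N Z)))
      + N (N (P.bracket (P.φA X) (P.bracket Y Z))) := by
    intro X Y Z
    have expand : P.bracketN N (P.φA X) (P.bracketN N Y Z) =
        P.bracket (N (P.φA X)) (P.bracketN N Y Z)
        + P.bracket (P.φA X) (N (P.bracketN N Y Z))
        - N (P.bracket (P.φA X) (P.bracketN N Y Z)) := rfl
    rw [expand, hW Y Z]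
    rw [show P.bracketN N Y Z =
        P.bracket (N Y) Z + P.bracket Y (N Z) - N (P.bracket Y Z) from rfl]
    simp only [hbsubr, hbr, map_sub, map_add]
    rw [hT (P.φA X) (P.bracket Y Z)]
    abel
  refine ⟨P.φA.bijective, fun X Y => map_add _ X Y, P.φA_smul, ?_, ?_, ?_, ?_, ?_, ?_, ?_,
    ?_, ?_, ?_⟩
  · intro X Y
    simp only [map_add]
  · intro f X
    simp only [map_smul]
  · intro X Y Z
    simp only [PreAlgebroid.bracketN, map_add, hbl]
    abel
  · intro X Y Z
    simp only [PreAlgebroid.bracketN, map_add, hbr]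
    abel
  · intro X Y
    simp only [PreAlgebroid.bracketN]
    rw [hskew (N X) Y, hskew X (N Y), hskew X Y, map_neg]
    abel
  · intro X Y
    simp only [PreAlgebroid.bracketN, map_sub, map_add, hφbr, hNφ]
  · -- Hom-Jacobi identity for the deformed bracket
    intro X Y Z
    rw [key X Y Z, key Y Z X, key Z X Y]
    have e1 := hjac (N X) (N Y) Z
    have e2 := hjac (N Y) (N Z) X
    have e3 := hjac (N Z) (N X) Y
    have f1 := hjac (N X) Y Z
    have f2 := hjac X (N Y) Z
    have f3 := hjac X Y (N Z)
    have j0 := hjac X Y Z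
    simp only [hNφ] at e1 e2 e3 f1 f2 f3
    have S2 := congrArg₂ (· + ·) (congrArg₂ (· + ·) e1 e2) e3
    have S1 := congrArg₂ (· + ·) (congrArg₂ (· + ·) f1 f2) f3
    have comb := congrArg₂ (fun a c => a - N c) S2 S1
    have comb2 := congrArg₂ (· + ·) comb (congrArg (fun a => N (N a)) j0)
    simp only [map_zero, add_zero, sub_zero, zero_add, zero_sub, neg_zero] at comb2
    refine Eq.trans ?_ comb2
    simp only [map_add]
    abel
  · intro X f Y
    simp only [PreAlgebroid.bracketN, map_smul, hlei, map_add, hNφ, smul_sub, smul_add]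
    abel
  · intro X
    show P.anchor (N (P.φA X)) = SDeriv.Ad σ (P.anchor (N X))
    rw [← hNφ, haφ]
  · intro X Y
    show P.anchor (N (P.bracketN N X Y)) = _
    rw [hW, habr]

end HomPaper
end

section
/- Let N be a Hom-Nijenhuis structure on a Hom-Lie algebroid (A, φ, φ_A, [·,·]_A, a_A) over M, and let d_N and d_A be the differentials of the Hom-Lie algebroids A_N and A respectively. Then for every f ∈ C∞(M): (i) d_N f = N* d_A f; (ii) d_N d_A f = − d_A d_N f. -/
set_option maxHeartbeats 1000000

namespace HomPaper

variable {R : Type} [CommRing R]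

/-- The differential on functions of the deformed Hom-Lie algebroid `A_N`:
`⟨d_N f, X⟩ = (a_A ∘ N)(X)(f)`. -/
def dNzero {R : Type} [CommRing R] {σ : R ≃+* R} {A : Type} [AddCommGroup A] [Module R A]
    (P : PreAlgebroid σ A) (N : A →ₗ[R] A) (f : R) : Module.Dual R A where
  toFun X := P.anchor (N X) f
  map_add' X Y := by show P.anchor (N (X + Y)) f = _; rw [map_add, map_add]; simp
  map_smul' c X := by
    show P.anchor (N (c • X)) f = _
    rw [map_smul, map_smul]; simp [smul_eq_mul]

/-- Let `N` be a Hom-Nijenhuis structure on a Hom-Lie algebroid `A`, with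
`d_N` and `d_A` the differentials of `A_N` and `A`.  Then for every `f ∈ C^∞(M)`:
(i) `d_N f = N^* d_A f`; (ii) `d_N d_A f = − d_A d_N f` (as 2-forms on `A`, where the
degree-one differential of `A_N` is computed from the data
`(φ_A, [·,·]_N, a_A ∘ N)`). -/
theorem hom_nijenhuis_differentials
    {R : Type} [CommRing R] {σ : R ≃+* R} {A : Type} [AddCommGroup A] [Module R A]
    (P : PreAlgebroid σ A) (hP : P.IsHomLie) (N : A →ₗ[R] A)
    (htorsion : ∀ X Y : A, P.torsion N X Y = 0) (hinv : P.phiEnd N = N) :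
    (∀ f : R, dNzero P N f = Ndual N (P.dZero f)) ∧
    (∀ (f : R) (X Y : A),
      (PreAlgebroid.mk P.φA P.φA_smul (P.bracketN N) (P.anchor ∘ₗ N)).dOne (P.dZero f) X Y
        = - P.dOne (dNzero P N f) X Y) := by
  obtain ⟨hbl, hbr, hskew, hφbr, hjac, hlei, haφ, habr⟩ := hP
  have hNφ : ∀ X : A, N (P.φA X) = P.φA (N X) := by
    intro X
    have h := congrArg (fun L : A →ₗ[R] A => L (P.φA X)) hinv
    simp only [PreAlgebroid.phiEnd, LinearMap.coe_mk, AddHom.coe_mk,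
      AddEquiv.symm_apply_apply] at h
    exact h.symm
  have hNφs : ∀ X : A, N (P.φA.symm X) = P.φA.symm (N X) := by
    intro X
    apply P.φA.injective
    rw [← hNφ]; simp
  have haφs : ∀ (X : A) (g : R), P.anchor (P.φA.symm X) g = σ.symm (P.anchor X (σ g)) := by
    intro X g
    have h := haφ (P.φA.symm X)
    rw [P.φA.apply_symm_apply] at h
    rw [h]; simp
  refine ⟨fun f => rfl, fun f X Y => ?_⟩
  simp only [PreAlgebroid.dOne, PreAlgebroid.bracketN, PreAlgebroid.phiDag_apply,
    PreAlgebroid.dZero_apply, dNzero, LinearMap.coe_comp, Function.comp_apply,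
    LinearMap.coe_mk, AddHom.coe_mk, map_add, map_sub, habr, hNφs, haφs, haφ,
    SDeriv.sbrack_apply, SDeriv.add_apply, SDeriv.neg_apply, SDeriv.Ad_apply,
    RingEquiv.apply_symm_apply, RingEquiv.symm_apply_apply, map_neg]
  ring

end HomPaper
end
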